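/- arXiv:0806.4403 — 10 statements merged into one kernel-verified Lean document; each statement's English description precedes it below -/
import Mathlib

section
/- Let X₁, X₂ ⊆ ℂ be open sets and let g₁ : X₁ → ℂ and g₂ : X₂ → ℂ be holomorphic (DifferentiableOn ℂ). Set U := {(z₁, z₂) ∈ ℂ × ℂ : z₁ − I·z₂ ∈ X₁ and z₁ + I·z₂ ∈ X₂} and define f = (f₁, f₂) : U → ℂ × ℂ by f₁(z₁, z₂) = (g₁(z₁ − I·z₂) + g₂(z₁ + I·z₂))/2 and f₂(z₁, z₂) = I·(g₁(z₁ − I·z₂) − g₂(z₁ + I·z₂))/2. Then U is open, f is 𝕋-holomorphic on U, and its components' partial derivatives satisfy (∂f₁/∂z₁)(z₁, z₂) = (g₁′(z₁ − I·z₂) + g₂′(z₁ + I·z₂))/2 and (∂f₂/∂z₁)(z₁, z₂) = I·(g₁′(z₁ − I·z₂) − g₂′(z₁ + I·z₂))/2 for all (z₁, z₂) ∈ U. -/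
/-- A function `f = (f₁, f₂) : U → ℂ × ℂ` is 𝕋-holomorphic (bicomplex holomorphic) on an open
set `U ⊆ ℂ × ℂ` if it is holomorphic on `U` as a map of two complex variables and its components
satisfy the complexified Cauchy–Riemann equations `∂f₁/∂z₁ = ∂f₂/∂z₂`, `∂f₂/∂z₁ = −∂f₁/∂z₂`. -/
def THolo (f : ℂ × ℂ → ℂ × ℂ) (U : Set (ℂ × ℂ)) : Prop :=
  DifferentiableOn ℂ f U ∧
  ∀ z ∈ U,
    fderiv ℂ (fun w => (f w).1) z (1, 0) = fderiv ℂ (fun w => (f w).2) z (0, 1) ∧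
    fderiv ℂ (fun w => (f w).2) z (1, 0) = -(fderiv ℂ (fun w => (f w).1) z (0, 1))

/-!
In the idempotent basis `e₁ = (1/2, I/2)`, `e₂ = (1/2, -I/2)` the map is `f = h₁ e₁ + h₂ e₂` with
`hᵢ = gᵢ ∘ Pᵢ`. By the chain rule `Dhᵢ(z) = gᵢ'(Pᵢ z) • Pᵢ`, so both derivatives are multiples of the
linear forms `Pᵢ`. For any such `h₁`, `h₂` the partial derivatives of the two components of
`h₁ e₁ + h₂ e₂` are explicit, and the Cauchy–Riemann equations reduce to `I² = -1`.
-/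

noncomputable section

namespace Bicomplex

open Complex ContinuousLinearMap

def P₁ : ℂ × ℂ →L[ℂ] ℂ := fst ℂ ℂ ℂ - I • snd ℂ ℂ ℂ

def P₂ : ℂ × ℂ →L[ℂ] ℂ := fst ℂ ℂ ℂ + I • snd ℂ ℂ ℂ

@[simp] theorem P₁_apply (w : ℂ × ℂ) : P₁ w = w.1 - I * w.2 := rfl

@[simp] theorem P₂_apply (w : ℂ × ℂ) : P₂ w = w.1 + I * w.2 := rfl

/-- The bicomplex function `h₁ e₁ + h₂ e₂`, written in coordinates. -/
def idempotentSum (h₁ h₂ : ℂ × ℂ → ℂ) (w : ℂ × ℂ) : ℂ × ℂ :=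
  ((h₁ w + h₂ w) / 2, I * (h₁ w - h₂ w) / 2)

section

variable {h₁ h₂ : ℂ × ℂ → ℂ} {a b : ℂ} {z : ℂ × ℂ}

theorem hasFDerivAt_idempotentSum_fst (hh₁ : HasFDerivAt h₁ (a • P₁) z)
    (hh₂ : HasFDerivAt h₂ (b • P₂) z) :
    HasFDerivAt (fun w => (idempotentSum h₁ h₂ w).1) ((a / 2) • P₁ + (b / 2) • P₂) z := by
  have hfun : (fun w => (idempotentSum h₁ h₂ w).1) = fun w => (h₁ w + h₂ w) * 2⁻¹ :=
    funext fun w => div_eq_mul_inv _ _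
  rw [hfun]
  refine ((hh₁.add hh₂).mul_const (2⁻¹ : ℂ)).congr_fderiv ?_
  module

theorem hasFDerivAt_idempotentSum_snd (hh₁ : HasFDerivAt h₁ (a • P₁) z)
    (hh₂ : HasFDerivAt h₂ (b • P₂) z) :
    HasFDerivAt (fun w => (idempotentSum h₁ h₂ w).2) ((I * a / 2) • P₁ - (I * b / 2) • P₂) z := by
  have hfun : (fun w => (idempotentSum h₁ h₂ w).2) = fun w => I * (h₁ w - h₂ w) * 2⁻¹ :=
    funext fun w => div_eq_mul_inv _ _
  rw [hfun]
  refine (((hh₁.sub hh₂).const_mul I).mul_const (2⁻¹ : ℂ)).congr_fderiv ?_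
  module

theorem idempotentSum_partials (hh₁ : HasFDerivAt h₁ (a • P₁) z)
    (hh₂ : HasFDerivAt h₂ (b • P₂) z) :
    fderiv ℂ (fun w => (idempotentSum h₁ h₂ w).1) z (1, 0) = (a + b) / 2 ∧
    fderiv ℂ (fun w => (idempotentSum h₁ h₂ w).1) z (0, 1) = I * (b - a) / 2 ∧
    fderiv ℂ (fun w => (idempotentSum h₁ h₂ w).2) z (1, 0) = I * (a - b) / 2 ∧
    fderiv ℂ (fun w => (idempotentSum h₁ h₂ w).2) z (0, 1) = (a + b) / 2 := by
  rw [(hasFDerivAt_idempotentSum_fst hh₁ hh₂).fderiv,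
    (hasFDerivAt_idempotentSum_snd hh₁ hh₂).fderiv]
  simp only [add_apply, sub_apply, smul_apply, P₁_apply, P₂_apply, smul_eq_mul,
    mul_zero, mul_one, sub_zero, add_zero, zero_sub, zero_add, mul_neg]
  exact ⟨by ring, by ring, by ring, by linear_combination (-(a + b) / 2) * I_sq⟩

theorem tHolo_idempotentSum {U : Set (ℂ × ℂ)}
    (h : ∀ z ∈ U, ∃ a b : ℂ, HasFDerivAt h₁ (a • P₁) z ∧ HasFDerivAt h₂ (b • P₂) z) :
    THolo (idempotentSum h₁ h₂) U := by
  refine ⟨fun z hz => ?_, fun z hz => ?_⟩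
  · obtain ⟨a, b, hh₁, hh₂⟩ := h z hz
    exact ((hasFDerivAt_idempotentSum_fst hh₁ hh₂).differentiableAt.prodMk
      (hasFDerivAt_idempotentSum_snd hh₁ hh₂).differentiableAt).differentiableWithinAt
  · obtain ⟨a, b, hh₁, hh₂⟩ := h z hz
    obtain ⟨h₁₀, h₀₁, h₁₀', h₀₁'⟩ := idempotentSum_partials hh₁ hh₂
    rw [h₁₀, h₀₁, h₁₀', h₀₁']
    constructor <;> ring

end

end Bicomplex

end

open Bicomplex in
/-- If `g₁`, `g₂` are holomorphic on open sets `X₁`, `X₂ ⊆ ℂ` then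
`f = g₁(P₁(·))e₁ + g₂(P₂(·))e₂` is 𝕋-holomorphic on
`U = {(z₁,z₂) : z₁ − I z₂ ∈ X₁, z₁ + I z₂ ∈ X₂}`, with the stated formula for its derivative. -/
theorem stmt2 (X₁ X₂ : Set ℂ) (hX₁ : IsOpen X₁) (hX₂ : IsOpen X₂)
    (g₁ g₂ : ℂ → ℂ) (hg₁ : DifferentiableOn ℂ g₁ X₁) (hg₂ : DifferentiableOn ℂ g₂ X₂) :
    let U : Set (ℂ × ℂ) :=
      {z : ℂ × ℂ | z.1 - Complex.I * z.2 ∈ X₁ ∧ z.1 + Complex.I * z.2 ∈ X₂}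
    let f : ℂ × ℂ → ℂ × ℂ := fun z =>
      ((g₁ (z.1 - Complex.I * z.2) + g₂ (z.1 + Complex.I * z.2)) / 2,
       Complex.I * (g₁ (z.1 - Complex.I * z.2) - g₂ (z.1 + Complex.I * z.2)) / 2)
    IsOpen U ∧ THolo f U ∧
    ∀ z ∈ U,
      fderiv ℂ (fun w => (f w).1) z (1, 0)
        = (deriv g₁ (z.1 - Complex.I * z.2) + deriv g₂ (z.1 + Complex.I * z.2)) / 2 ∧
      fderiv ℂ (fun w => (f w).2) z (1, 0)
        = Complex.I * (deriv g₁ (z.1 - Complex.I * z.2) - deriv g₂ (z.1 + Complex.I * z.2)) / 2 := by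
  intro U f
  have hderiv : ∀ z ∈ U, HasFDerivAt (fun w => g₁ (P₁ w)) (deriv g₁ (P₁ z) • P₁) z ∧
      HasFDerivAt (fun w => g₂ (P₂ w)) (deriv g₂ (P₂ z) • P₂) z := fun z hz =>
    ⟨(hg₁.differentiableAt (hX₁.mem_nhds hz.1)).hasDerivAt.comp_hasFDerivAt z P₁.hasFDerivAt,
     (hg₂.differentiableAt (hX₂.mem_nhds hz.2)).hasDerivAt.comp_hasFDerivAt z P₂.hasFDerivAt⟩
  refine ⟨(hX₁.preimage P₁.continuous).inter (hX₂.preimage P₂.continuous),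
    tHolo_idempotentSum fun z hz => ⟨_, _, hderiv z hz⟩, fun z hz => ?_⟩
  obtain ⟨h₁₀, -, h₁₀', -⟩ := idempotentSum_partials (hderiv z hz).1 (hderiv z hz).2
  exact ⟨h₁₀, h₁₀'⟩
end

section
/- Let D ⊆ ℂ × ℂ be a nonempty open connected set, let D₁ := Prod.fst '' D and D₂ := Prod.snd '' D, and for an index type S let (g_s : D₁ → ℂ) and (h_s : D₂ → ℂ) be families of holomorphic functions; define F_s : D → ℂ × ℂ by F_s(w₁, w₂) = (g_s(w₁), h_s(w₂)). Then the family {F_s} is locally uniformly bounded on D if and only if {g_s} is locally uniformly bounded on D₁ and {h_s} is locally uniformly bounded on D₂. -/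
/-! Boundedness on compacta passes along the coordinate projections in both directions: they are
continuous, and since they are open maps out of a locally compact space, every compact subset of
`Prod.fst '' D` lies in the projection of a compact subset of `D`, namely of a finite union of
compact neighbourhoods of points of `D`. -/

open Set

theorem IsOpenMap.exists_isCompact_subset_image {X Y : Type*} [TopologicalSpace X]
    [LocallyCompactSpace X] [TopologicalSpace Y] {f : X → Y} (hf : IsOpenMap f) {U : Set X}
    (hU : IsOpen U) {K : Set Y} (hK : IsCompact K) (hKU : K ⊆ f '' U) :
    ∃ L, IsCompact L ∧ L ⊆ U ∧ K ⊆ f '' L := by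
  choose! C hCc hxC hCU using fun x (hx : x ∈ U) => exists_compact_subset hU hx
  have hcover : K ⊆ ⋃ x ∈ U, f '' interior (C x) := by
    rintro _ hy
    obtain ⟨x, hx, rfl⟩ := hKU hy
    exact mem_biUnion hx (mem_image_of_mem f (hxC x hx))
  obtain ⟨t, htU, ht, hKt⟩ := hK.elim_finite_subcover_image
    (fun x _ => hf _ isOpen_interior) hcover
  refine ⟨⋃ x ∈ t, C x, ht.isCompact_biUnion fun x hx => hCc x (htU hx),
    iUnion₂_subset fun x hx => hCU x (htU hx), hKt.trans ?_⟩
  simp only [image_iUnion₂]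
  exact biUnion_mono subset_rfl fun x _ => image_mono interior_subset

theorem IsOpenMap.exists_bound_on_isCompact_of_bound_comp {X Y S : Type*} [TopologicalSpace X]
    [LocallyCompactSpace X] [TopologicalSpace Y] {f : X → Y} (hf : IsOpenMap f) {U : Set X}
    (hU : IsOpen U) (φ : S → Y → ℝ)
    (hφ : ∀ L ⊆ U, IsCompact L → ∃ M, ∀ s, ∀ x ∈ L, φ s (f x) ≤ M) :
    ∀ K ⊆ f '' U, IsCompact K → ∃ M, ∀ s, ∀ y ∈ K, φ s y ≤ M := by
  intro K hKU hK
  obtain ⟨L, hLc, hLU, hKL⟩ := hf.exists_isCompact_subset_image hU hK hKU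
  obtain ⟨M, hM⟩ := hφ L hLU hLc
  refine ⟨M, fun s y hy => ?_⟩
  obtain ⟨x, hx, rfl⟩ := hKL hy
  exact hM s x hx

theorem stmt6_general {S : Type*} (D : Set (ℂ × ℂ)) (hD : IsOpen D)
    (g h : S → ℂ → ℂ) :
    (∀ K : Set (ℂ × ℂ), K ⊆ D → IsCompact K →
        ∃ M : ℝ, ∀ s : S, ∀ w ∈ K, ‖(g s w.1, h s w.2)‖ ≤ M) ↔
      ((∀ K₁ : Set ℂ, K₁ ⊆ Prod.fst '' D → IsCompact K₁ →
          ∃ M₁ : ℝ, ∀ s : S, ∀ z ∈ K₁, ‖g s z‖ ≤ M₁) ∧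
       (∀ K₂ : Set ℂ, K₂ ⊆ Prod.snd '' D → IsCompact K₂ →
          ∃ M₂ : ℝ, ∀ s : S, ∀ z ∈ K₂, ‖h s z‖ ≤ M₂)) := by
  constructor
  · intro hbd
    refine ⟨isOpenMap_fst.exists_bound_on_isCompact_of_bound_comp hD _ fun L hLD hL => ?_,
      isOpenMap_snd.exists_bound_on_isCompact_of_bound_comp hD _ fun L hLD hL => ?_⟩ <;>
    · obtain ⟨M, hM⟩ := hbd L hLD hL
      exact ⟨M, fun s w hw => le_trans (by simp [Prod.norm_def]) (hM s w hw)⟩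
  · rintro ⟨hg, hh⟩ K hKD hK
    obtain ⟨M₁, hM₁⟩ := hg _ (image_mono hKD) (hK.image continuous_fst)
    obtain ⟨M₂, hM₂⟩ := hh _ (image_mono hKD) (hK.image continuous_snd)
    exact ⟨max M₁ M₂, fun s w hw =>
      max_le_max (hM₁ s w.1 (mem_image_of_mem _ hw)) (hM₂ s w.2 (mem_image_of_mem _ hw))⟩

/-- A family of split-form bicomplex holomorphic functions on an arbitrary bicomplex domain
`D ⊆ ℂ × ℂ` is locally uniformly bounded on `D` if and only if both component families are
locally uniformly bounded on the coordinate projections `D₁ = Prod.fst '' D`,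
`D₂ = Prod.snd '' D`. -/
theorem stmt6 {S : Type*} (D : Set (ℂ × ℂ)) (hD : IsOpen D) (hconn : IsConnected D)
    (g h : S → ℂ → ℂ)
    (hg : ∀ s, DifferentiableOn ℂ (g s) (Prod.fst '' D))
    (hh : ∀ s, DifferentiableOn ℂ (h s) (Prod.snd '' D)) :
    (∀ K : Set (ℂ × ℂ), K ⊆ D → IsCompact K →
        ∃ M : ℝ, ∀ s : S, ∀ w ∈ K, ‖(g s w.1, h s w.2)‖ ≤ M) ↔
      ((∀ K₁ : Set ℂ, K₁ ⊆ Prod.fst '' D → IsCompact K₁ →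
          ∃ M₁ : ℝ, ∀ s : S, ∀ z ∈ K₁, ‖g s z‖ ≤ M₁) ∧
       (∀ K₂ : Set ℂ, K₂ ⊆ Prod.snd '' D → IsCompact K₂ →
          ∃ M₂ : ℝ, ∀ s : S, ∀ z ∈ K₂, ‖h s z‖ ≤ M₂)) :=
  stmt6_general D hD g h
end

section
/- Let D ⊆ ℂ × ℂ be a nonempty open connected set and let 𝓕 be a family of 𝕋-holomorphic functions on D. If 𝓕 is locally uniformly bounded on D, then 𝓕 is normal on D: every sequence in 𝓕 has a subsequence converging uniformly on every compact subset of D to some limit function. (Bicomplex Montel theorem.) -/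
/-- A family `F : ι → α → β` of functions is normal on a set `U` if every sequence in the
family has a subsequence converging uniformly on every compact subset of `U` to some limit
function. -/
def NormalOn {α β ι : Type*} [TopologicalSpace α] [UniformSpace β]
    (F : ι → α → β) (U : Set α) : Prop :=
  ∀ u : ℕ → ι, ∃ φ : ℕ → ℕ, StrictMono φ ∧ ∃ f : α → β,
    ∀ K : Set α, K ⊆ U → IsCompact K →
      TendstoUniformlyOn (fun n => F (u (φ n))) f Filter.atTop K

open Set Filter Topology Metric Uniformity UniformConvergence

theorem UniformOnFun.isCountablyGenerated_uniformity_of_isOpen {X α : Type*}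
    [TopologicalSpace X] [LocallyCompactSpace X] [SecondCountableTopology X]
    [UniformSpace α] [IsCountablyGenerated (𝓤 α)] {U : Set X} (hU : IsOpen U) :
    IsCountablyGenerated (𝓤 (X →ᵤ[{K | K ⊆ U ∧ IsCompact K}] α)) := by
  have := hU.locallyCompactSpace
  let K := CompactExhaustion.choice U
  refine UniformOnFun.isCountablyGenerated_uniformity _ (t := fun n => ((↑) : U → X) '' K n)
    (fun n => ⟨Subtype.coe_image_subset _ _, (K.isCompact n).image continuous_subtype_val⟩)
    (fun m n h => image_mono (K.subset h)) fun L ⟨hLU, hL⟩ => ?_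
  obtain ⟨n, hn⟩ := K.exists_superset_of_isCompact
    (Subtype.isCompact_iff.2 <| by
      rwa [image_preimage_eq_of_subset (hLU.trans_eq Subtype.range_coe.symm)])
  exact ⟨n, fun x hx => ⟨⟨x, hLU hx⟩, hn hx, rfl⟩⟩

theorem normalOn_of_equicontinuousOn {X α ι : Type*}
    [TopologicalSpace X] [LocallyCompactSpace X] [SecondCountableTopology X]
    [UniformSpace α] [T2Space α] [IsCountablyGenerated (𝓤 α)]
    {U : Set X} (hU : IsOpen U) {f : ι → X → α} (hf : EquicontinuousOn f U)
    (hbd : ∀ x ∈ U, ∃ Q, IsCompact Q ∧ ∀ i, f i x ∈ Q) : NormalOn f U := by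
  intro u
  let 𝔖 : Set (Set X) := {K | K ⊆ U ∧ IsCompact K}
  have := UniformOnFun.isCountablyGenerated_uniformity_of_isOpen (α := α) hU
  -- Arzelà–Ascoli in `X →ᵤ[𝔖] α` itself, embedded by the identity.
  have hcpt : IsCompact (closure (range (UniformOnFun.ofFun 𝔖 ∘ f))) :=
    ArzelaAscoli.isCompact_closure_of_isClosedEmbedding (fun K hK => hK.2)
      (F := UniformOnFun.toFun 𝔖) .id
      (fun K hK => (equicontinuousOn_iff_range.1 hf).mono hK.1)
      (fun K hK x hx => by
        obtain ⟨Q, hQ, hfQ⟩ := hbd x (hK.1 hx)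
        exact ⟨Q, hQ, by rintro - ⟨i, rfl⟩; exact hfQ i⟩)
  obtain ⟨g, -, φ, hφ, hlim⟩ :=
    hcpt.tendsto_subseq fun n => subset_closure (mem_range_self (u n))
  exact ⟨φ, hφ, g, fun K hKU hK => UniformOnFun.tendsto_iff_tendstoUniformlyOn.1 hlim K ⟨hKU, hK⟩⟩

section Holomorphic

variable {E F : Type*} [NormedAddCommGroup E] [NormedSpace ℂ E]
  [NormedAddCommGroup F] [NormedSpace ℂ F]

theorem dist_le_of_differentiableOn_ball_of_norm_le {f : E → F} {c z : E} {R M : ℝ}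
    (hd : DifferentiableOn ℂ f (ball c R)) (hM : ∀ w ∈ ball c R, ‖f w‖ ≤ M) (hz : z ∈ ball c R) :
    dist (f z) (f c) ≤ 2 * M / R * dist z c := by
  refine Complex.dist_le_div_mul_dist_of_mapsTo_ball hd (fun w hw => ?_) hz
  calc dist (f w) (f c) ≤ ‖f w‖ + ‖f c‖ := dist_le_norm_add_norm _ _
    _ ≤ 2 * M := by linarith [hM w hw, hM c (mem_ball_self (nonempty_ball.1 ⟨z, hz⟩))]

theorem equicontinuousAt_of_differentiableOn_ball {ι : Type*} {f : ι → E → F} {c : E} {R M : ℝ}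
    (hR : 0 < R) (hd : ∀ i, DifferentiableOn ℂ (f i) (ball c R))
    (hM : ∀ i, ∀ w ∈ ball c R, ‖f i w‖ ≤ M) : EquicontinuousAt f c := by
  refine Metric.equicontinuousAt_of_continuity_modulus (fun z => 2 * M / R * dist z c) ?_ f ?_
  · simpa using ((continuous_id.dist (continuous_const (y := c))).const_mul (2 * M / R)).tendsto c
  · filter_upwards [ball_mem_nhds c hR] with z hz i
    rw [dist_comm]
    exact dist_le_of_differentiableOn_ball_of_norm_le (hd i) (hM i) hz

theorem normalOn_of_differentiableOn [ProperSpace E] [ProperSpace F] {ι : Type*} {D : Set E}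
    (hD : IsOpen D) {f : ι → E → F} (hf : ∀ i, DifferentiableOn ℂ (f i) D)
    (hbd : ∀ K ⊆ D, IsCompact K → ∃ M : ℝ, ∀ i, ∀ z ∈ K, ‖f i z‖ ≤ M) : NormalOn f D := by
  refine normalOn_of_equicontinuousOn hD (fun c hc => ?_) fun x hx => ?_
  · obtain ⟨R, hR, hRD⟩ := nhds_basis_closedBall.mem_iff.1 (hD.mem_nhds hc)
    obtain ⟨M, hM⟩ := hbd _ hRD (isCompact_closedBall c R)
    exact (equicontinuousAt_of_differentiableOn_ball hR
      (fun i => (hf i).mono (ball_subset_closedBall.trans hRD))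
      fun i w hw => hM i w (ball_subset_closedBall hw)).equicontinuousWithinAt D
  · obtain ⟨M, hM⟩ := hbd {x} (singleton_subset_iff.2 hx) isCompact_singleton
    exact ⟨closedBall 0 M, isCompact_closedBall 0 M,
      fun i => mem_closedBall_zero_iff.2 (hM i x rfl)⟩

end Holomorphic

theorem stmt8_general {ι : Type*} (D : Set (ℂ × ℂ)) (hD : IsOpen D)
    (F : ι → ℂ × ℂ → ℂ × ℂ) (hholo : ∀ i, THolo (F i) D)
    (hbd : ∀ K : Set (ℂ × ℂ), K ⊆ D → IsCompact K →
      ∃ M : ℝ, ∀ i : ι, ∀ z ∈ K, ‖F i z‖ ≤ M) :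
    NormalOn F D :=
  normalOn_of_differentiableOn hD (fun i => (hholo i).1) hbd

/-- **Bicomplex Montel theorem.** Every locally uniformly bounded family of bicomplex
holomorphic functions on a bicomplex domain `D` is normal on `D`. -/
theorem stmt8 {ι : Type*} (D : Set (ℂ × ℂ)) (hD : IsOpen D) (hconn : IsConnected D)
    (F : ι → ℂ × ℂ → ℂ × ℂ) (hholo : ∀ i, THolo (F i) D)
    (hbd : ∀ K : Set (ℂ × ℂ), K ⊆ D → IsCompact K →
      ∃ M : ℝ, ∀ i : ι, ∀ z ∈ K, ‖F i z‖ ≤ M) :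
    NormalOn F D :=
  stmt8_general D hD F hholo hbd
end

section
/- Let D ⊆ ℂ × ℂ be a nonempty open connected set, let D₁ := Prod.fst '' D and D₂ := Prod.snd '' D, and for an index type S let (g_s : D₁ → ℂ) and (h_s : D₂ → ℂ) be families of holomorphic functions; define F_s : D → ℂ × ℂ by F_s(w₁, w₂) = (g_s(w₁), h_s(w₂)). Then the family {F_s} is normal on D if and only if {g_s} is normal on D₁ and {h_s} is normal on D₂. -/
/-!
A compact subset of `D` projects onto compact subsets of `D₁` and `D₂`, so subsequences along
which both component families converge on compacta make the split family converge on compacta.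
Conversely, `D` being open and `ℂ × ℂ` locally compact, convergence on compacta of `D` is locally
uniform convergence; since the projections are open maps, locally uniform convergence of
`g ∘ Prod.fst` near a point of `D` gives locally uniform convergence of `g` near its projection,
towards the pointwise limit.
-/

open Filter Set

theorem TendstoUniformlyOn.comp_tendsto {ι κ α β : Type*} [UniformSpace β] {F : ι → α → β}
    {f : α → β} {p : Filter ι} {s : Set α} (h : TendstoUniformlyOn F f p s) {q : Filter κ}
    {ψ : κ → ι} (hψ : Tendsto ψ q p) : TendstoUniformlyOn (fun n => F (ψ n)) f q s :=
  fun V hV => hψ.eventually (h V hV)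

theorem TendstoLocallyUniformlyOn.of_comp_isOpenMap {ι X A γ : Type*} [TopologicalSpace X]
    [TopologicalSpace A] [UniformSpace γ] [T2Space γ] [Nonempty γ] {p : Filter ι} [p.NeBot]
    {π : X → A} {G : ι → A → γ} {f : X → γ} {U : Set X} (hπ : IsOpenMap π) (hU : IsOpen U)
    (h : TendstoLocallyUniformlyOn (fun n => G n ∘ π) f p U) :
    TendstoLocallyUniformlyOn G (fun a => limUnder p (G · a)) p (π '' U) := by
  rintro V hV _ ⟨w, hw, rfl⟩
  obtain ⟨t, ht, hclose⟩ := h V hV w hw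
  rw [hU.nhdsWithin_eq hw] at ht
  refine ⟨π '' (t ∩ U), nhdsWithin_le_nhds (hπ.image_mem_nhds (inter_mem ht (hU.mem_nhds hw))),
    ?_⟩
  filter_upwards [hclose] with n hn
  rintro _ ⟨w', ⟨hw't, hw'U⟩, rfl⟩
  have hlim : limUnder p (G · (π w')) = f w' := (h.tendsto_at hw'U).limUnder_eq
  simpa [hlim] using hn w' hw't

section NormalOn

variable {ι α β : Type*} [TopologicalSpace α] [UniformSpace β]

theorem NormalOn.comp_left {δ : Type*} [UniformSpace δ] {F : ι → α → β} {U : Set α}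
    {φ : β → δ} (hφ : UniformContinuous φ) (h : NormalOn F U) : NormalOn (fun s => φ ∘ F s) U :=
  fun u =>
    let ⟨ψ, hψ, f, hf⟩ := h u
    ⟨ψ, hψ, φ ∘ f, fun K hKU hK => hφ.comp_tendstoUniformlyOn (hf K hKU hK)⟩

theorem NormalOn.of_comp_isOpenMap {A : Type*} [TopologicalSpace A] [LocallyCompactSpace α]
    [LocallyCompactSpace A] [T2Space β] [Nonempty β] {π : α → A} {G : ι → A → β} {U : Set α}
    (hπ : IsOpenMap π) (hU : IsOpen U) (h : NormalOn (fun s => G s ∘ π) U) :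
    NormalOn G (π '' U) := by
  intro u
  obtain ⟨φ, hφ, f, hf⟩ := h u
  rw [← tendstoLocallyUniformlyOn_iff_forall_isCompact hU] at hf
  exact ⟨φ, hφ, _, (tendstoLocallyUniformlyOn_iff_forall_isCompact (hπ U hU)).1
    (hf.of_comp_isOpenMap hπ hU)⟩

theorem NormalOn.prodMap {α' β' : Type*} [TopologicalSpace α'] [UniformSpace β']
    {F : ι → α → β} {G : ι → α' → β'} {U : Set (α × α')} (hF : NormalOn F (Prod.fst '' U))
    (hG : NormalOn G (Prod.snd '' U)) : NormalOn (fun s w => (F s w.1, G s w.2)) U := by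
  intro u
  obtain ⟨φ, hφ, f, hf⟩ := hF u
  obtain ⟨ψ, hψ, g, hg⟩ := hG (u ∘ φ)
  refine ⟨φ ∘ ψ, hφ.comp hψ, fun w => (f w.1, g w.2), fun K hKU hK => ?_⟩
  have hfst : TendstoUniformlyOn (fun n w => F (u (φ (ψ n))) w.1) (fun w => f w.1) atTop K :=
    (((hf _ (image_mono hKU) (hK.image continuous_fst)).comp Prod.fst).mono
      (subset_preimage_image _ _)).comp_tendsto hψ.tendsto_atTop
  have hsnd : TendstoUniformlyOn (fun n w => G (u (φ (ψ n))) w.2) (fun w => g w.2) atTop K :=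
    ((hg _ (image_mono hKU) (hK.image continuous_snd)).comp Prod.snd).mono
      (subset_preimage_image _ _)
  exact fun V hV => (hfst.prodMk hsnd V hV).diag_of_prod

end NormalOn

theorem stmt10_general {S : Type*} (D : Set (ℂ × ℂ)) (hD : IsOpen D)
    (g h : S → ℂ → ℂ) :
    NormalOn (fun s => fun w : ℂ × ℂ => (g s w.1, h s w.2)) D ↔
      (NormalOn g (Prod.fst '' D) ∧ NormalOn h (Prod.snd '' D)) := by
  refine ⟨fun hF => ⟨?_, ?_⟩, fun ⟨hg, hh⟩ => hg.prodMap hh⟩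
  · exact NormalOn.of_comp_isOpenMap (G := g) isOpenMap_fst hD
      (hF.comp_left uniformContinuous_fst)
  · exact NormalOn.of_comp_isOpenMap (G := h) isOpenMap_snd hD
      (hF.comp_left uniformContinuous_snd)

/-- A family of split-form bicomplex holomorphic functions is normal on an arbitrary bicomplex
domain `D` if and only if both component families are normal on the coordinate projections
`D₁ = Prod.fst '' D` and `D₂ = Prod.snd '' D`. -/
theorem stmt10 {S : Type*} (D : Set (ℂ × ℂ)) (hD : IsOpen D) (hconn : IsConnected D)
    (g h : S → ℂ → ℂ)
    (hg : ∀ s, DifferentiableOn ℂ (g s) (Prod.fst '' D))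
    (hh : ∀ s, DifferentiableOn ℂ (h s) (Prod.snd '' D)) :
    NormalOn (fun s => fun w : ℂ × ℂ => (g s w.1, h s w.2)) D ↔
      (NormalOn g (Prod.fst '' D) ∧ NormalOn h (Prod.snd '' D)) :=
  stmt10_general D hD g h
end

section
/- Let D ⊆ ℂ × ℂ be a nonempty open connected set, let D₁ := Prod.fst '' D and D₂ := Prod.snd '' D, and for an index type S let (g_s : D₁ → ℂ) and (h_s : D₂ → ℂ) be families of holomorphic functions; define F_s : D₁ × D₂ → ℂ × ℂ by F_s(w₁, w₂) = (g_s(w₁), h_s(w₂)). If the family of restrictions {F_s|_D} is normal on D, then the family {F_s} is normal on the (possibly larger) product domain D₁ × D₂. -/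
open Filter Set Topology

theorem normalOn_iff_of_isOpen {α β ι : Type*} [TopologicalSpace α] [LocallyCompactSpace α]
    [UniformSpace β] {F : ι → α → β} {U : Set α} (hU : IsOpen U) :
    NormalOn F U ↔ ∀ u : ℕ → ι, ∃ φ : ℕ → ℕ, StrictMono φ ∧ ∃ f : α → β,
      TendstoLocallyUniformlyOn (fun n => F (u (φ n))) f atTop U := by
  simp only [NormalOn, tendstoLocallyUniformlyOn_iff_forall_isCompact hU]

namespace TendstoLocallyUniformlyOn

variable {X Y β γ ι : Type*} [TopologicalSpace X] [TopologicalSpace Y] [UniformSpace β]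
  [UniformSpace γ] {p : Filter ι}

theorem of_comp_fst [T2Space β] [p.NeBot] {F : ι → X → β} {f : X × Y → β}
    {D : Set (X × Y)} (hD : IsOpen D) (σ : X → Y) (hσ : ∀ x ∈ Prod.fst '' D, (x, σ x) ∈ D)
    (hF : TendstoLocallyUniformlyOn (fun n w => F n w.1) f p D) :
    TendstoLocallyUniformlyOn F (fun x => f (x, σ x)) p (Prod.fst '' D) := by
  have hslices : Prod.fst '' D = ⋃ y, (·, y) ⁻¹' D := by ext x; simp
  rw [hslices]
  refine tendstoLocallyUniformlyOn_iUnion (fun y => hD.preimage (by fun_prop)) fun y => ?_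
  have hslice := hF.comp (·, y) (fun _ hx => hx) (by fun_prop)
  refine hslice.congr_right fun x hx => ?_
  exact tendsto_nhds_unique (hF.tendsto_at hx) (hF.tendsto_at (hσ x ⟨_, hx, rfl⟩))

theorem of_comp_snd [T2Space β] [p.NeBot] {F : ι → Y → β} {f : X × Y → β}
    {D : Set (X × Y)} (hD : IsOpen D) (τ : Y → X) (hτ : ∀ y ∈ Prod.snd '' D, (τ y, y) ∈ D)
    (hF : TendstoLocallyUniformlyOn (fun n w => F n w.2) f p D) :
    TendstoLocallyUniformlyOn F (fun y => f (τ y, y)) p (Prod.snd '' D) := by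
  have hswap : Prod.snd '' D = Prod.fst '' (Prod.swap ⁻¹' D) := by
    rw [← image_swap_eq_preimage_swap, image_image]; rfl
  rw [hswap] at hτ ⊢
  exact of_comp_fst (hD.preimage continuous_swap) τ hτ
    (hF.comp Prod.swap (fun _ hw => hw) continuous_swap.continuousOn)

theorem prodMap {G : ι → X → β} {H : ι → Y → γ} {g : X → β} {h : Y → γ} {s : Set X}
    {t : Set Y} (hG : TendstoLocallyUniformlyOn G g p s)
    (hH : TendstoLocallyUniformlyOn H h p t) :
    TendstoLocallyUniformlyOn (fun n w => (G n w.1, H n w.2)) (fun w => (g w.1, h w.2)) p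
      (s ×ˢ t) :=
  (hG.comp Prod.fst mapsTo_fst_prod continuousOn_fst).prodMk
    (hH.comp Prod.snd mapsTo_snd_prod continuousOn_snd)

end TendstoLocallyUniformlyOn

theorem stmt11_general {S : Type*} (D : Set (ℂ × ℂ)) (hD : IsOpen D)
    (g h : S → ℂ → ℂ)
    (hnormal : NormalOn (fun s => fun w : ℂ × ℂ => (g s w.1, h s w.2)) D) :
    NormalOn (fun s => fun w : ℂ × ℂ => (g s w.1, h s w.2))
      ((Prod.fst '' D) ×ˢ (Prod.snd '' D)) := by
  have hfst : ∀ x ∈ Prod.fst '' D, ∃ y, (x, y) ∈ D := by rintro _ ⟨w, hw, rfl⟩; exact ⟨w.2, hw⟩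
  have hsnd : ∀ y ∈ Prod.snd '' D, ∃ x, (x, y) ∈ D := by rintro _ ⟨w, hw, rfl⟩; exact ⟨w.1, hw⟩
  choose! σ hσ using hfst
  choose! τ hτ using hsnd
  rw [normalOn_iff_of_isOpen hD] at hnormal
  rw [normalOn_iff_of_isOpen ((isOpenMap_fst D hD).prod (isOpenMap_snd D hD))]
  intro u
  obtain ⟨φ, hφ, f, hf⟩ := hnormal u
  have hg := (uniformContinuous_fst.comp_tendstoLocallyUniformlyOn hf).of_comp_fst hD σ hσ
  have hh := (uniformContinuous_snd.comp_tendstoLocallyUniformlyOn hf).of_comp_snd hD τ hτ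
  exact ⟨φ, hφ, _, hg.prodMap hh⟩

/-- If a family of split-form bicomplex holomorphic functions is normal on a bicomplex domain
`D`, then it is normal on the larger 𝕋-cartesian domain
`D₁ × D₂ = (Prod.fst '' D) ×ˢ (Prod.snd '' D)`. -/
theorem stmt11 {S : Type*} (D : Set (ℂ × ℂ)) (hD : IsOpen D) (hconn : IsConnected D)
    (g h : S → ℂ → ℂ)
    (hg : ∀ s, DifferentiableOn ℂ (g s) (Prod.fst '' D))
    (hh : ∀ s, DifferentiableOn ℂ (h s) (Prod.snd '' D))
    (hnormal : NormalOn (fun s => fun w : ℂ × ℂ => (g s w.1, h s w.2)) D) :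
    NormalOn (fun s => fun w : ℂ × ℂ => (g s w.1, h s w.2))
      ((Prod.fst '' D) ×ˢ (Prod.snd '' D)) :=
  stmt11_general D hD g h hnormal
end

section
/- Let D ⊆ ℂ × ℂ be an open set, let (f_n) be a sequence of 𝕋-holomorphic functions on D, and suppose (f_n) converges uniformly on every compact subset of D to a function f : D → ℂ × ℂ. Then f is 𝕋-holomorphic on D. (Bicomplex Weierstrass theorem.) -/
/-!
In the idempotent coordinates `ξ = z₁ - i z₂`, `η = z₁ + i z₂`, taken both in the source and in
the target, the complexified Cauchy–Riemann equations say that the first component of `f` has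
no `η`-derivative and the second no `ξ`-derivative. On a polydisc such a component is a
holomorphic function of one variable composed with a coordinate projection. This description is
stable under locally uniform limits: the limit still factors through the projection, and the
factor is holomorphic by the one-variable Weierstrass theorem applied to the slices.
-/

open Complex Filter Metric Set ContinuousLinearMap

section PartialDerivatives

variable {F : Type*} [NormedAddCommGroup F] [NormedSpace ℂ F]

theorem apply_eq_apply_mk_fst_of_fderiv_apply_snd_eq_zero {g : ℂ × ℂ → F} {w : ℂ × ℂ} {r : ℝ}
    (hg : DifferentiableOn ℂ g (ball w r)) (hg' : ∀ z ∈ ball w r, fderiv ℂ g z (0, 1) = 0)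
    {z : ℂ × ℂ} (hz : z ∈ ball w r) : g z = g (z.1, w.2) := by
  rw [← ball_prod_same] at hg hg' hz
  have hslice : ∀ η ∈ ball w.2 r, HasDerivAt (fun η => g (z.1, η)) 0 η := fun η hη => by
    have hzη : (z.1, η) ∈ ball w.1 r ×ˢ ball w.2 r := ⟨hz.1, hη⟩
    rw [← hg' _ hzη]
    exact (hg.differentiableAt ((isOpen_ball.prod isOpen_ball).mem_nhds hzη)).hasFDerivAt
      |>.comp_hasDerivAt η ((hasDerivAt_const η z.1).prodMk (hasDerivAt_id η))
  exact isOpen_ball.is_const_of_deriv_eq_zero (convex_ball _ _).isPreconnected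
    (fun η hη => (hslice η hη).differentiableAt.differentiableWithinAt)
    (fun η hη => (hslice η hη).deriv) hz.2 (mem_ball_self (pos_of_mem_ball hz.2))

variable [CompleteSpace F] {ι : Type*} {l : Filter ι} [l.NeBot] {U : Set (ℂ × ℂ)}
  {g : ι → ℂ × ℂ → F} {g₀ : ℂ × ℂ → F}

theorem TendstoLocallyUniformlyOn.differentiableOn_and_fderiv_apply_snd_eq_zero
    (hlim : TendstoLocallyUniformlyOn g g₀ l U) (hU : IsOpen U)
    (hg : ∀ i, DifferentiableOn ℂ (g i) U) (hg' : ∀ i, ∀ z ∈ U, fderiv ℂ (g i) z (0, 1) = 0) :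
    DifferentiableOn ℂ g₀ U ∧ ∀ z ∈ U, fderiv ℂ g₀ z (0, 1) = 0 := by
  have hderiv : ∀ w ∈ U, HasFDerivAt g₀ (fderiv ℂ (fun ξ => g₀ (ξ, w.2)) w.1 ∘L fst ℂ ℂ ℂ) w := by
    intro w hw
    obtain ⟨r, hr, hball⟩ := isOpen_iff.mp hU w hw
    have hslice : MapsTo (fun ξ => (ξ, w.2)) (ball w.1 r) U := fun ξ hξ =>
      hball (by rw [← ball_prod_same]; exact ⟨hξ, mem_ball_self hr⟩)
    have hfactor : ∀ z ∈ ball w r, g₀ z = g₀ (z.1, w.2) := fun z hz =>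
      tendsto_nhds_unique (hlim.tendsto_at (hball hz)) <| by
        simp_rw [apply_eq_apply_mk_fst_of_fderiv_apply_snd_eq_zero ((hg _).mono hball)
          (fun z hz => hg' _ z (hball hz)) hz]
        rw [← ball_prod_same] at hz
        exact hlim.tendsto_at (hslice hz.1)
    have hφ : DifferentiableOn ℂ (fun ξ => g₀ (ξ, w.2)) (ball w.1 r) :=
      (hlim.comp _ hslice (by fun_prop)).differentiableOn
        (.of_forall fun i => (hg i).comp (by fun_prop) hslice) isOpen_ball
    exact ((hφ.differentiableAt (ball_mem_nhds _ hr)).hasFDerivAt.comp w hasFDerivAt_fst)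
      |>.congr_of_eventuallyEq (eventually_of_mem (ball_mem_nhds w hr) hfactor)
  exact ⟨fun w hw => (hderiv w hw).differentiableAt.differentiableWithinAt,
    fun w hw => by simp [(hderiv w hw).fderiv]⟩

theorem TendstoLocallyUniformlyOn.differentiableOn_and_fderiv_apply_fst_eq_zero
    (hlim : TendstoLocallyUniformlyOn g g₀ l U) (hU : IsOpen U)
    (hg : ∀ i, DifferentiableOn ℂ (g i) U) (hg' : ∀ i, ∀ z ∈ U, fderiv ℂ (g i) z (1, 0) = 0) :
    DifferentiableOn ℂ g₀ U ∧ ∀ z ∈ U, fderiv ℂ g₀ z (1, 0) = 0 := by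
  let σ := ContinuousLinearEquiv.prodComm ℂ ℂ ℂ
  obtain ⟨hdiff, hderiv⟩ :=
    (hlim.comp σ (mapsTo_preimage σ U) σ.continuous.continuousOn)
      |>.differentiableOn_and_fderiv_apply_snd_eq_zero (hU.preimage σ.continuous)
        (fun i => σ.comp_right_differentiableOn_iff.2 (hg i))
        (fun i z hz => by simpa [σ, σ.comp_right_fderiv] using hg' i _ hz)
  refine ⟨σ.comp_right_differentiableOn_iff.1 hdiff, fun z hz => ?_⟩
  simpa [σ, σ.comp_right_fderiv] using hderiv (σ z) (by simpa [σ] using hz)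

end PartialDerivatives

/-- The idempotent representation `z₁ + j z₂ = (z₁ - i z₂) e₁ + (z₁ + i z₂) e₂` of a bicomplex
number, where `e₁ = (1 + ij)/2` and `e₂ = (1 - ij)/2`. -/
noncomputable def idempotentCoords : (ℂ × ℂ) ≃L[ℂ] ℂ × ℂ :=
  .equivOfInverse ((fst ℂ ℂ ℂ - I • snd ℂ ℂ ℂ).prod (fst ℂ ℂ ℂ + I • snd ℂ ℂ ℂ))
    ((2⁻¹ : ℂ) • ((fst ℂ ℂ ℂ + snd ℂ ℂ ℂ).prod (I • (fst ℂ ℂ ℂ - snd ℂ ℂ ℂ))))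
    (fun z => by ext <;> simp <;> ring_nf; simp [I_sq])
    (fun w => by ext <;> simp <;> ring_nf <;> simp [I_sq] <;> ring)

@[simp]
theorem idempotentCoords_apply (z : ℂ × ℂ) :
    idempotentCoords z = (z.1 - I * z.2, z.1 + I * z.2) :=
  rfl

@[simp]
theorem idempotentCoords_symm_apply (w : ℂ × ℂ) :
    idempotentCoords.symm w = ((w.1 + w.2) / 2, I * (w.1 - w.2) / 2) := by
  ext <;> simp [idempotentCoords] <;> ring

theorem cauchyRiemann_iff_idempotentCoords (L : ℂ × ℂ →L[ℂ] ℂ × ℂ) :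
    ((L (1, 0)).1 = (L (0, 1)).2 ∧ (L (1, 0)).2 = -(L (0, 1)).1) ↔
      (idempotentCoords (L (idempotentCoords.symm (0, 1)))).1 = 0 ∧
        (idempotentCoords (L (idempotentCoords.symm (1, 0)))).2 = 0 := by
  have hL (v : ℂ × ℂ) : L v = v.1 • L (1, 0) + v.2 • L (0, 1) := by
    rw [← map_smul, ← map_smul, ← map_add]; simp
  rw [hL (idempotentCoords.symm _), hL (idempotentCoords.symm _)]
  generalize L (1, 0) = a, L (0, 1) = b
  simp only [idempotentCoords_symm_apply, idempotentCoords_apply, Prod.fst_add, Prod.snd_add,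
    Prod.smul_fst, Prod.smul_snd, smul_eq_mul]
  constructor
  · rintro ⟨h₁, h₂⟩
    constructor
    · linear_combination h₁ / 2 - I / 2 * h₂ + b.2 / 2 * I_sq
    · linear_combination h₁ / 2 + I / 2 * h₂ + b.2 / 2 * I_sq
  · rintro ⟨h₁, h₂⟩
    constructor
    · linear_combination h₁ + h₂ - b.2 * I_sq
    · linear_combination I * (h₁ - h₂) + (a.2 + b.1) * I_sq

def SplitHoloOn (g : ℂ × ℂ → ℂ × ℂ) (U : Set (ℂ × ℂ)) : Prop :=
  DifferentiableOn ℂ g U ∧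
  ∀ z ∈ U, fderiv ℂ (fun w => (g w).1) z (0, 1) = 0 ∧ fderiv ℂ (fun w => (g w).2) z (1, 0) = 0

theorem tHolo_iff_splitHoloOn {f : ℂ × ℂ → ℂ × ℂ} {U : Set (ℂ × ℂ)} (hU : IsOpen U) :
    THolo f U ↔
      SplitHoloOn (idempotentCoords ∘ f ∘ idempotentCoords.symm) (idempotentCoords.symm ⁻¹' U) := by
  rw [THolo, SplitHoloOn, idempotentCoords.comp_differentiableOn_iff,
    idempotentCoords.symm.comp_right_differentiableOn_iff,
    idempotentCoords.symm.surjective.forall]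
  refine and_congr_right fun hf => forall₂_congr fun w hw => ?_
  have hfw : DifferentiableAt ℂ f (idempotentCoords.symm w) :=
    hf.differentiableAt (hU.mem_nhds hw)
  have hgw : DifferentiableAt ℂ (idempotentCoords ∘ f ∘ idempotentCoords.symm) w :=
    idempotentCoords.comp_differentiableAt_iff.2 <|
      idempotentCoords.symm.comp_right_differentiableAt_iff.2 hfw
  rw [fderiv.fst hfw, fderiv.snd hfw, fderiv.fst hgw, fderiv.snd hgw,
    idempotentCoords.comp_fderiv, idempotentCoords.symm.comp_right_fderiv]
  exact cauchyRiemann_iff_idempotentCoords (fderiv ℂ f (idempotentCoords.symm w))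

theorem SplitHoloOn.of_tendstoLocallyUniformlyOn {ι : Type*} {l : Filter ι} [l.NeBot]
    {U : Set (ℂ × ℂ)} {g : ι → ℂ × ℂ → ℂ × ℂ} {g₀ : ℂ × ℂ → ℂ × ℂ} (hU : IsOpen U)
    (hg : ∀ i, SplitHoloOn (g i) U) (hlim : TendstoLocallyUniformlyOn g g₀ l U) :
    SplitHoloOn g₀ U := by
  obtain ⟨hd₁, hd₁'⟩ := (uniformContinuous_fst.comp_tendstoLocallyUniformlyOn hlim)
    |>.differentiableOn_and_fderiv_apply_snd_eq_zero hU (fun i => (hg i).1.fst)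
      (fun i z hz => ((hg i).2 z hz).1)
  obtain ⟨hd₂, hd₂'⟩ := (uniformContinuous_snd.comp_tendstoLocallyUniformlyOn hlim)
    |>.differentiableOn_and_fderiv_apply_fst_eq_zero hU (fun i => (hg i).1.snd)
      (fun i z hz => ((hg i).2 z hz).2)
  exact ⟨hd₁.prodMk hd₂, fun z hz => ⟨hd₁' z hz, hd₂' z hz⟩⟩

/-- **Bicomplex Weierstrass theorem.** If a sequence of bicomplex holomorphic functions on an
open set `D ⊆ ℂ × ℂ` converges uniformly on every compact subset of `D` to a function `f`,
then `f` is bicomplex holomorphic on `D`. -/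
theorem stmt13 (D : Set (ℂ × ℂ)) (hD : IsOpen D)
    (f : ℂ × ℂ → ℂ × ℂ) (fs : ℕ → ℂ × ℂ → ℂ × ℂ)
    (hholo : ∀ n, THolo (fs n) D)
    (hconv : ∀ K : Set (ℂ × ℂ), K ⊆ D → IsCompact K →
      TendstoUniformlyOn fs f Filter.atTop K) :
    THolo f D := by
  have hlim : TendstoLocallyUniformlyOn fs f atTop D :=
    (tendstoLocallyUniformlyOn_iff_forall_isCompact hD).2 hconv
  rw [tHolo_iff_splitHoloOn hD]
  exact .of_tendstoLocallyUniformlyOn (hD.preimage idempotentCoords.symm.continuous)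
    (fun n => (tHolo_iff_splitHoloOn hD).1 (hholo n))
    (idempotentCoords.lipschitz.uniformContinuous.comp_tendstoLocallyUniformlyOn
      (hlim.comp idempotentCoords.symm (mapsTo_preimage _ _)
        idempotentCoords.symm.continuous.continuousOn))
end

section
/- Let D ⊆ ℂ × ℂ be a nonempty open set, let D₁ := Prod.fst '' D and D₂ := Prod.snd '' D, and for an index type S let (g_s : D₁ → ℂ) and (h_s : D₂ → ℂ) be families of holomorphic functions; define F_s : D → ℂ × ℂ by F_s(w₁, w₂) = (g_s(w₁), h_s(w₂)). If {g_s} is normal in the general sense on D₁ and {h_s} is normal in the general sense on D₂, then {F_s} is normal in the general sense on D. -/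
/-!
Diagonal extraction: take a subsequence along which the first components converge or diverge
uniformly on compacts, then a further one along which the second components do. Compact subsets of
`D` project to compact subsets of `D₁` and `D₂`, so the pairs converge uniformly on compacts if both
components do, and diverge as soon as one component does, since the norm on `ℂ × ℂ` dominates the
norm of each coordinate.
-/

/-- A family `F : ι → α → E` of functions into a normed space is normal in the general sense on
a set `U` if every sequence in the family has a subsequence which either converges uniformly on
every compact subset of `U` to a limit function, or diverges uniformly to `∞` on every compact
subset of `U`. -/
def NormalGenOn {α E ι : Type*} [TopologicalSpace α] [NormedAddCommGroup E]
    (F : ι → α → E) (U : Set α) : Prop :=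
  ∀ u : ℕ → ι, ∃ φ : ℕ → ℕ, StrictMono φ ∧
    ((∃ f : α → E, ∀ K : Set α, K ⊆ U → IsCompact K →
        TendstoUniformlyOn (fun n => F (u (φ n))) f Filter.atTop K) ∨
     (∀ K : Set α, K ⊆ U → IsCompact K → ∀ M : ℝ, 0 < M →
        ∀ᶠ n in Filter.atTop, ∀ z ∈ K, M ≤ ‖F (u (φ n)) z‖))

open Filter Set

section

variable {α β ι κ E E' : Type*} [TopologicalSpace α] [TopologicalSpace β]

def TendstoUniformlyOnCompacts [UniformSpace E] (F : ι → α → E) (f : α → E) (l : Filter ι)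
    (U : Set α) : Prop :=
  ∀ K ⊆ U, IsCompact K → TendstoUniformlyOn F f l K

def TendstoNormAtTopOnCompacts [Norm E] (F : ι → α → E) (l : Filter ι) (U : Set α) : Prop :=
  ∀ K ⊆ U, IsCompact K → ∀ M : ℝ, 0 < M → ∀ᶠ n in l, ∀ z ∈ K, M ≤ ‖F n z‖

def ConvergesOrDivergesOnCompacts [SeminormedAddCommGroup E] (F : ι → α → E) (l : Filter ι)
    (U : Set α) : Prop :=
  (∃ f, TendstoUniformlyOnCompacts F f l U) ∨ TendstoNormAtTopOnCompacts F l U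

theorem NormalGenOn.exists_strictMono [NormedAddCommGroup E] {F : ι → α → E} {U : Set α}
    (hF : NormalGenOn F U) (u : ℕ → ι) :
    ∃ φ : ℕ → ℕ, StrictMono φ ∧ ConvergesOrDivergesOnCompacts (fun n => F (u (φ n))) atTop U :=
  hF u

section Subsequence

variable {l : Filter ι} {l' : Filter κ} {U : Set α} {φ : κ → ι}

theorem TendstoUniformlyOnCompacts.comp_tendsto [UniformSpace E] {F : ι → α → E} {f : α → E}
    (hF : TendstoUniformlyOnCompacts F f l U) (hφ : Tendsto φ l' l) :
    TendstoUniformlyOnCompacts (fun n => F (φ n)) f l' U :=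
  fun K hKU hK u hu => hφ.eventually (hF K hKU hK u hu)

theorem TendstoNormAtTopOnCompacts.comp_tendsto [Norm E] {F : ι → α → E}
    (hF : TendstoNormAtTopOnCompacts F l U) (hφ : Tendsto φ l' l) :
    TendstoNormAtTopOnCompacts (fun n => F (φ n)) l' U :=
  fun K hKU hK M hM => hφ.eventually (hF K hKU hK M hM)

theorem ConvergesOrDivergesOnCompacts.comp_tendsto [SeminormedAddCommGroup E] {F : ι → α → E}
    (hF : ConvergesOrDivergesOnCompacts F l U) (hφ : Tendsto φ l' l) :
    ConvergesOrDivergesOnCompacts (fun n => F (φ n)) l' U :=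
  hF.imp (fun ⟨f, hf⟩ => ⟨f, hf.comp_tendsto hφ⟩) (·.comp_tendsto hφ)

end Subsequence

section Pullback

variable {l : Filter ι} {U : Set β} {V : Set α} {p : β → α}

theorem TendstoUniformlyOnCompacts.comp_continuous [UniformSpace E] {F : ι → α → E} {f : α → E}
    (hF : TendstoUniformlyOnCompacts F f l V) (hp : Continuous p) (hpUV : MapsTo p U V) :
    TendstoUniformlyOnCompacts (fun n => F n ∘ p) (f ∘ p) l U :=
  fun K hKU hK =>
    ((hF (p '' K) (hpUV.mono_left hKU).image_subset (hK.image hp)).comp p).mono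
      (subset_preimage_image p K)

theorem TendstoNormAtTopOnCompacts.comp_continuous [Norm E] {F : ι → α → E}
    (hF : TendstoNormAtTopOnCompacts F l V) (hp : Continuous p) (hpUV : MapsTo p U V) :
    TendstoNormAtTopOnCompacts (fun n => F n ∘ p) l U :=
  fun K hKU hK M hM =>
    (hF (p '' K) (hpUV.mono_left hKU).image_subset (hK.image hp) M hM).mono
      fun _ hn z hz => hn (p z) (mem_image_of_mem p hz)

theorem ConvergesOrDivergesOnCompacts.comp_continuous [SeminormedAddCommGroup E]
    {F : ι → α → E} (hF : ConvergesOrDivergesOnCompacts F l V) (hp : Continuous p)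
    (hpUV : MapsTo p U V) :
    ConvergesOrDivergesOnCompacts (fun n => F n ∘ p) l U :=
  hF.imp (fun ⟨f, hf⟩ => ⟨f ∘ p, hf.comp_continuous hp hpUV⟩) (·.comp_continuous hp hpUV)

end Pullback

section Pairs

variable {l : Filter ι} {U : Set α}

theorem TendstoUniformlyOnCompacts.prodMk [UniformSpace E] [UniformSpace E'] {F : ι → α → E}
    {G : ι → α → E'} {f : α → E} {g : α → E'} (hF : TendstoUniformlyOnCompacts F f l U)
    (hG : TendstoUniformlyOnCompacts G g l U) :
    TendstoUniformlyOnCompacts (fun n z => (F n z, G n z)) (fun z => (f z, g z)) l U :=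
  fun K hKU hK u hu => tendsto_diag.eventually (((hF K hKU hK).prodMk (hG K hKU hK)) u hu)

theorem TendstoNormAtTopOnCompacts.prodMk_left [SeminormedAddCommGroup E]
    [SeminormedAddCommGroup E'] {F : ι → α → E} (hF : TendstoNormAtTopOnCompacts F l U)
    (G : ι → α → E') : TendstoNormAtTopOnCompacts (fun n z => (F n z, G n z)) l U :=
  fun K hKU hK M hM => (hF K hKU hK M hM).mono
    fun n hn z hz => (hn z hz).trans (norm_fst_le (F n z, G n z))

theorem TendstoNormAtTopOnCompacts.prodMk_right [SeminormedAddCommGroup E]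
    [SeminormedAddCommGroup E'] (F : ι → α → E) {G : ι → α → E'}
    (hG : TendstoNormAtTopOnCompacts G l U) :
    TendstoNormAtTopOnCompacts (fun n z => (F n z, G n z)) l U :=
  fun K hKU hK M hM => (hG K hKU hK M hM).mono
    fun n hn z hz => (hn z hz).trans (norm_snd_le (F n z, G n z))

theorem ConvergesOrDivergesOnCompacts.prodMk [SeminormedAddCommGroup E]
    [SeminormedAddCommGroup E'] {F : ι → α → E} {G : ι → α → E'}
    (hF : ConvergesOrDivergesOnCompacts F l U) (hG : ConvergesOrDivergesOnCompacts G l U) :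
    ConvergesOrDivergesOnCompacts (fun n z => (F n z, G n z)) l U := by
  rcases hG with ⟨g, hg⟩ | hG
  · rcases hF with ⟨f, hf⟩ | hF
    · exact .inl ⟨_, hf.prodMk hg⟩
    · exact .inr (hF.prodMk_left G)
  · exact .inr (hG.prodMk_right F)

end Pairs

end

theorem stmt14_general {S : Type*} (D : Set (ℂ × ℂ))
    (g h : S → ℂ → ℂ)
    (hng : NormalGenOn g (Prod.fst '' D)) (hnh : NormalGenOn h (Prod.snd '' D)) :
    NormalGenOn (fun s => fun w : ℂ × ℂ => (g s w.1, h s w.2)) D := by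
  intro u
  obtain ⟨φ, hφ, hg⟩ := hng.exists_strictMono u
  obtain ⟨ψ, hψ, hh⟩ := hnh.exists_strictMono (u ∘ φ)
  have hgψ := hg.comp_tendsto hψ.tendsto_atTop
  exact ⟨φ ∘ ψ, hφ.comp hψ, (hgψ.comp_continuous continuous_fst (mapsTo_image _ _)).prodMk
    (hh.comp_continuous continuous_snd (mapsTo_image _ _))⟩

/-- If both component families of a family of split-form bicomplex holomorphic functions are
normal in the general sense on the coordinate projections `D₁ = Prod.fst '' D`,
`D₂ = Prod.snd '' D`, then the bicomplex family is normal in the general sense on `D`. -/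
theorem stmt14 {S : Type*} (D : Set (ℂ × ℂ)) (hD : IsOpen D) (hne : D.Nonempty)
    (g h : S → ℂ → ℂ)
    (hg : ∀ s, DifferentiableOn ℂ (g s) (Prod.fst '' D))
    (hh : ∀ s, DifferentiableOn ℂ (h s) (Prod.snd '' D))
    (hng : NormalGenOn g (Prod.fst '' D)) (hnh : NormalGenOn h (Prod.snd '' D)) :
    NormalGenOn (fun s => fun w : ℂ × ℂ => (g s w.1, h s w.2)) D :=
  stmt14_general D g h hng hnh
end

section
/- Let q₁, q₂ be complex polynomials with deg q₁ = deg q₂ = d ≥ 2, and define F : ℂ × ℂ → ℂ × ℂ by F(w₁, w₂) = (q₁.eval w₁, q₂.eval w₂). Then the bicomplex Julia set equals the topological boundary of the bicomplex filled-in Julia set: J₂(F) = frontier K₂(F). -/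
/-- A family is normal in the general sense at a point if it is normal in the general sense on
some open neighborhood of that point. -/
def NormalGenAt {α E ι : Type*} [TopologicalSpace α] [NormedAddCommGroup E]
    (F : ι → α → E) (z : α) : Prop :=
  ∃ U : Set α, IsOpen U ∧ z ∈ U ∧ NormalGenOn F U

/-- The Julia set of a self-map `G` of a normed space: the set of points at which the family of
iterates `{G^[n] : n ∈ ℕ}` is not normal in the general sense. -/
def juliaSet {E : Type*} [NormedAddCommGroup E] (G : E → E) : Set E :=
  {z | ¬ NormalGenAt (fun n : ℕ => G^[n]) z}

/-- The filled-in Julia set of a self-map `G` of a normed space: the set of points with bounded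
orbit under `G`. -/
def filledJuliaSet {E : Type*} [NormedAddCommGroup E] (G : E → E) : Set E :=
  {z | Bornology.IsBounded (Set.range fun n : ℕ => G^[n] z)}

open Filter Metric Set Topology

section Normality

variable {α β E ι : Type*} [NormedAddCommGroup E]

def DivergesUniformlyOn (F : ℕ → α → E) (U : Set α) : Prop :=
  ∀ M : ℝ, ∀ᶠ n in atTop, ∀ w ∈ U, M ≤ ‖F n w‖

def HasUniformlyConvergentSubseqOn [UniformSpace β] (F : ι → α → β) (s : Set α) : Prop :=
  ∀ u : ℕ → ι, ∃ φ : ℕ → ℕ, StrictMono φ ∧ ∃ f : α → β,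
    TendstoUniformlyOn (fun n => F (u (φ n))) f atTop s

namespace DivergesUniformlyOn

variable {F : ℕ → α → E} {U V : Set α}

lemma mono (h : DivergesUniformlyOn F U) (hVU : V ⊆ U) : DivergesUniformlyOn F V :=
  fun M => (h M).mono fun _ hn w hw => hn w (hVU hw)

lemma tendsto_norm_atTop (h : DivergesUniformlyOn F U) {w : α} (hw : w ∈ U) :
    Tendsto (fun n => ‖F n w‖) atTop atTop :=
  tendsto_atTop.2 fun M => (h M).mono fun _ hn => hn w hw

lemma prodMap_fst {γ E' : Type*} [NormedAddCommGroup E'] (h : DivergesUniformlyOn F U)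
    (G : ℕ → γ → E') : DivergesUniformlyOn (fun n => Prod.map (F n) (G n)) (Prod.fst ⁻¹' U) :=
  fun M => (h M).mono fun n hn w hw => (hn w.1 hw).trans (norm_fst_le (Prod.map (F n) (G n) w))

lemma prodMap_snd {γ E' : Type*} [NormedAddCommGroup E'] (h : DivergesUniformlyOn F U)
    (G : ℕ → γ → E') : DivergesUniformlyOn (fun n => Prod.map (G n) (F n)) (Prod.snd ⁻¹' U) :=
  fun M => (h M).mono fun n hn w hw => (hn w.2 hw).trans (norm_snd_le (Prod.map (G n) (F n) w))

end DivergesUniformlyOn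

lemma exists_strictMono_eq_or_tendsto_atTop (u : ℕ → ℕ) :
    (∃ c, ∃ φ : ℕ → ℕ, StrictMono φ ∧ ∀ n, u (φ n) = c) ∨ Tendsto u atTop atTop := by
  by_cases h : ∃ c, ∃ᶠ n in atTop, u n = c
  · obtain ⟨c, hc⟩ := h
    exact Or.inl ⟨c, extraction_of_frequently_atTop hc⟩
  · simp only [not_exists, not_frequently] at h
    refine Or.inr (tendsto_atTop.2 fun b => ?_)
    filter_upwards [(eventually_all_finset (Finset.range b)).2 fun c _ => h c] with n hn
    by_contra! hlt
    exact hn (u n) (Finset.mem_range.2 hlt) rfl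

variable [TopologicalSpace α]

lemma DivergesUniformlyOn.normalGenOn {F : ℕ → α → E} {U : Set α}
    (h : DivergesUniformlyOn F U) : NormalGenOn F U := by
  intro u
  rcases exists_strictMono_eq_or_tendsto_atTop u with ⟨c, φ, hφ, hc⟩ | hu
  · refine ⟨φ, hφ, Or.inl ⟨F c, fun K _ _ => ?_⟩⟩
    simp only [hc]
    exact fun _ hV => Eventually.of_forall fun _ _ _ => refl_mem_uniformity hV
  · exact ⟨id, strictMono_id, Or.inr fun K hK _ M _ =>
      (hu.eventually (h M)).mono fun _ hn z hz => hn z (hK hz)⟩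

lemma HasUniformlyConvergentSubseqOn.normalGenAt {F : ℕ → α → E} {s : Set α} {z : α}
    (h : HasUniformlyConvergentSubseqOn F s) (hs : s ∈ 𝓝 z) : NormalGenAt F z := by
  refine ⟨interior s, isOpen_interior, mem_interior_iff_mem_nhds.2 hs, fun u => ?_⟩
  obtain ⟨φ, hφ, f, hf⟩ := h u
  exact ⟨φ, hφ, Or.inl ⟨f, fun K hK _ => hf.mono (hK.trans interior_subset)⟩⟩

lemma not_normalGenAt_of_mem_closure {F : ℕ → α → E} {z : α}
    (hz : Bornology.IsBounded (range fun n => F n z))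
    (hcl : z ∈ closure {w | Tendsto (fun n => ‖F n w‖) atTop atTop}) : ¬ NormalGenAt F z := by
  rintro ⟨U, hU, hzU, hnormal⟩
  obtain ⟨w, hwU, hw⟩ := mem_closure_iff.1 hcl U hU hzU
  obtain ⟨φ, hφ, ⟨f, hf⟩ | hdiv⟩ := hnormal id
  · have hfw : Tendsto (fun n => F (φ n) w) atTop (𝓝 (f w)) :=
      tendstoUniformlyOn_singleton_iff_tendsto.1
        (hf {w} (singleton_subset_iff.2 hwU) isCompact_singleton)
    exact not_tendsto_atTop_of_tendsto_nhds hfw.norm (hw.comp hφ.tendsto_atTop)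
  · obtain ⟨C, hC⟩ := isBounded_iff_forall_norm_le.1 hz
    obtain ⟨n, hn⟩ := (hdiv {z} (singleton_subset_iff.2 hzU) isCompact_singleton (max C 0 + 1)
      (by positivity)).exists
    have hlow : max C 0 + 1 ≤ ‖F (φ n) z‖ := hn z rfl
    linarith [hC _ (mem_range_self (φ n)), le_max_left C 0]

end Normality

section FilledJuliaSet

variable {E E' : Type*} [NormedAddCommGroup E] [NormedAddCommGroup E']

lemma notMem_filledJuliaSet_of_tendsto {G : E → E} {z : E}
    (hz : Tendsto (fun n => ‖G^[n] z‖) atTop atTop) : z ∉ filledJuliaSet G := fun hK => by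
  obtain ⟨C, hC⟩ := isBounded_iff_forall_norm_le.1 hK
  obtain ⟨n, hn⟩ := (hz.eventually_gt_atTop C).exists
  exact (hC _ (mem_range_self n)).not_gt hn

lemma iterate_mem_filledJuliaSet {G : E → E} {z : E} (hz : z ∈ filledJuliaSet G) (m : ℕ) :
    G^[m] z ∈ filledJuliaSet G :=
  Bornology.IsBounded.subset hz <| range_subset_iff.2 fun n =>
    ⟨n + m, Function.iterate_add_apply G n m z⟩

lemma filledJuliaSet_prodMap (G : E → E) (G' : E' → E') :
    filledJuliaSet (Prod.map G G') = filledJuliaSet G ×ˢ filledJuliaSet G' := by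
  ext z
  simp only [filledJuliaSet, mem_ofPred_eq, mem_prod, Prod.map_iterate]
  constructor
  · intro h
    exact ⟨by simpa only [← range_comp, Function.comp_def, Prod.map_fst] using h.image_fst,
      by simpa only [← range_comp, Function.comp_def, Prod.map_snd] using h.image_snd⟩
  · rintro ⟨h, h'⟩
    exact (h.prod h').subset (range_subset_iff.2 fun n => ⟨mem_range_self n, mem_range_self n⟩)

theorem juliaSet_eq_frontier_filledJuliaSet {G : E → E}
    (hesc : ∀ z ∉ filledJuliaSet G, ∃ U ∈ 𝓝 z, DivergesUniformlyOn (fun n => G^[n]) U)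
    (hint : ∀ z ∈ interior (filledJuliaSet G), NormalGenAt (fun n => G^[n]) z) :
    juliaSet G = frontier (filledJuliaSet G) := by
  have hescaping : (filledJuliaSet G)ᶜ ⊆ {w | Tendsto (fun n => ‖G^[n] w‖) atTop atTop} :=
    fun w hw => by
      obtain ⟨U, hU, hdiv⟩ := hesc w hw
      exact hdiv.tendsto_norm_atTop (mem_of_mem_nhds hU)
  have hclosed : IsClosed (filledJuliaSet G) := isOpen_compl_iff.1 <| isOpen_iff_mem_nhds.2
    fun z hz => by
      obtain ⟨U, hU, hdiv⟩ := hesc z hz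
      exact mem_of_superset hU fun w hw =>
        notMem_filledJuliaSet_of_tendsto (hdiv.tendsto_norm_atTop hw)
  ext z
  rw [hclosed.frontier_eq]
  simp only [juliaSet, mem_ofPred_eq, Set.mem_sdiff]
  constructor
  · intro hz
    refine ⟨by_contra fun hzK => hz ?_, fun hzi => hz (hint z hzi)⟩
    obtain ⟨U, hU, hdiv⟩ := hesc z hzK
    obtain ⟨V, hVU, hV, hzV⟩ := _root_.mem_nhds_iff.1 hU
    exact ⟨V, hV, hzV, (hdiv.mono hVU).normalGenOn⟩
  · rintro ⟨hzK, hzi⟩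
    exact not_normalGenAt_of_mem_closure hzK (closure_mono hescaping (by rwa [closure_compl]))

end FilledJuliaSet

structure IsEscapeRadius {E : Type*} [NormedAddCommGroup E] (G : E → E) (R : ℝ) : Prop where
  pos : 0 < R
  two_mul_le_norm : ∀ w, R ≤ ‖w‖ → 2 * ‖w‖ ≤ ‖G w‖

namespace IsEscapeRadius

variable {E : Type*} [NormedAddCommGroup E] {G : E → E} {R : ℝ}

lemma two_pow_mul_le_norm_iterate (h : IsEscapeRadius G R) {w : E} (hw : R ≤ ‖w‖) (n : ℕ) :
    2 ^ n * ‖w‖ ≤ ‖G^[n] w‖ := by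
  induction n with
  | zero => simp
  | succ n ih =>
    have hR : R ≤ ‖G^[n] w‖ := hw.trans <| (le_mul_of_one_le_left (norm_nonneg w)
      (one_le_pow₀ one_le_two)).trans ih
    rw [Function.iterate_succ_apply', pow_succ', mul_assoc]
    exact (mul_le_mul_of_nonneg_left ih zero_le_two).trans (h.two_mul_le_norm _ hR)

lemma norm_iterate_le (h : IsEscapeRadius G R) {w : E} (hw : w ∈ filledJuliaSet G) (n : ℕ) :
    ‖G^[n] w‖ ≤ R := by
  by_contra! hn
  refine notMem_filledJuliaSet_of_tendsto ?_ (iterate_mem_filledJuliaSet hw n)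
  refine tendsto_atTop_mono (h.two_pow_mul_le_norm_iterate hn.le) ?_
  exact (tendsto_pow_atTop_atTop_of_one_lt one_lt_two).atTop_mul_const (h.pos.trans hn)

lemma divergesUniformlyOn (h : IsEscapeRadius G R) {U : Set E} {m : ℕ}
    (hU : ∀ w ∈ U, R ≤ ‖G^[m] w‖) : DivergesUniformlyOn (fun n => G^[n]) U := by
  intro M
  obtain ⟨N, hN⟩ := eventually_atTop.1 <|
    ((tendsto_pow_atTop_atTop_of_one_lt one_lt_two).atTop_mul_const h.pos).eventually_ge_atTop M
  filter_upwards [eventually_ge_atTop (N + m)] with n hn w hw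
  obtain ⟨k, rfl⟩ := Nat.exists_eq_add_of_le' (le_of_add_le_right hn)
  rw [Function.iterate_add_apply]
  calc M ≤ 2 ^ k * R := hN k (by omega)
    _ ≤ 2 ^ k * ‖G^[m] w‖ := by gcongr; exact hU w hw
    _ ≤ ‖G^[k] (G^[m] w)‖ := h.two_pow_mul_le_norm_iterate (hU w hw) k

lemma exists_mem_nhds_divergesUniformlyOn (h : IsEscapeRadius G R) (hG : Continuous G) {z : E}
    (hz : z ∉ filledJuliaSet G) : ∃ U ∈ 𝓝 z, DivergesUniformlyOn (fun n => G^[n]) U := by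
  obtain ⟨m, hm⟩ : ∃ m, R < ‖G^[m] z‖ := by
    by_contra! hle
    exact hz (isBounded_iff_forall_norm_le.2 ⟨R, forall_mem_range.2 hle⟩)
  exact ⟨{w | R < ‖G^[m] w‖}, (isOpen_lt continuous_const (hG.iterate m).norm).mem_nhds hm,
    h.divergesUniformlyOn fun w hw => le_of_lt hw⟩

end IsEscapeRadius

lemma Polynomial.exists_isEscapeRadius {𝕜 : Type*} [NormedField 𝕜] (q : Polynomial 𝕜)
    (hq : 2 ≤ q.natDegree) : ∃ R, IsEscapeRadius (fun x => q.eval x) R := by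
  have hdeg : 0 < q.divX.degree := by
    rw [← Polynomial.natDegree_pos_iff_degree_pos, Polynomial.natDegree_divX_eq_natDegree_tsub_one]
    omega
  obtain ⟨A, -, hA⟩ := (atTop_basis.comap norm).eventually_iff.1 <|
    (q.divX.tendsto_norm_atTop hdeg tendsto_comap).eventually_ge_atTop 3
  refine ⟨max A (max ‖q.coeff 0‖ 1), by positivity, fun w hw => ?_⟩
  have h3 : 3 ≤ ‖q.divX.eval w‖ := hA (le_of_max_le_left hw)
  have hc : ‖q.coeff 0‖ ≤ ‖w‖ := (le_max_left _ _).trans (le_of_max_le_right hw)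
  have hq : q.eval w = q.divX.eval w * w + q.coeff 0 := by
    conv_lhs => rw [← q.divX_mul_X_add]
    simp
  calc 2 * ‖w‖ = 3 * ‖w‖ - ‖w‖ := by ring
    _ ≤ ‖q.divX.eval w‖ * ‖w‖ - ‖q.coeff 0‖ := by gcongr
    _ ≤ ‖q.eval w‖ := by
      rw [hq, ← norm_mul]
      linarith [norm_le_add_norm_add (q.divX.eval w * w) (q.coeff 0)]

lemma HasUniformlyConvergentSubseqOn.prodMap {ι α β γ δ : Type*} [UniformSpace β] [UniformSpace δ]
    {F : ι → α → β} {G : ι → γ → δ} {s : Set α} {t : Set γ}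
    (hF : HasUniformlyConvergentSubseqOn F s) (hG : HasUniformlyConvergentSubseqOn G t) :
    HasUniformlyConvergentSubseqOn (fun i => Prod.map (F i) (G i)) (s ×ˢ t) := by
  intro u
  obtain ⟨φ, hφ, f, hf⟩ := hF u
  obtain ⟨ψ, hψ, g, hg⟩ := hG (u ∘ φ)
  have hf' : TendstoUniformlyOn (fun n => F (u (φ (ψ n)))) f atTop s :=
    fun V hV => hψ.tendsto_atTop.eventually (hf V hV)
  exact ⟨φ ∘ ψ, hφ.comp hψ, Prod.map f g,
    fun V hV => tendsto_diag.eventually (hf'.prodMap hg V hV)⟩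

lemma hasUniformlyConvergentSubseqOn_of_lipschitzOnWith {ι α β : Type*} [PseudoMetricSpace α]
    [MetricSpace β] {F : ι → α → β} {s : Set α} {t : Set β} {L : NNReal} (hs : IsCompact s)
    (ht : IsCompact t) (hlip : ∀ i, LipschitzOnWith L (F i) s) (hmaps : ∀ i, MapsTo (F i) s t) :
    HasUniformlyConvergentSubseqOn F s := by
  intro u
  have : CompactSpace s := isCompact_iff_compactSpace.1 hs
  let v : ℕ → BoundedContinuousFunction s β := fun n =>
    .mkOfCompact ⟨s.domRestrict (F (u n)), (hlip (u n)).continuousOn.domRestrict⟩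
  have hequi : Equicontinuous ((↑) : range v → s → β) :=
    (LipschitzWith.uniformEquicontinuous _ L <| by
      rintro ⟨_, n, rfl⟩
      exact (hlip (u n)).to_restrict).equicontinuous
  obtain ⟨f, -, φ, hφ, hconv⟩ := (BoundedContinuousFunction.arzela_ascoli t ht (range v)
    (by rintro _ x ⟨n, rfl⟩; exact hmaps (u n) x.2) hequi).tendsto_subseq
    fun n => subset_closure (mem_range_self n)
  refine ⟨φ, hφ, Function.extend Subtype.val f (F (u 0)), ?_⟩
  rw [tendstoUniformlyOn_iff_tendstoUniformly_comp_coe,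
    show Function.extend Subtype.val f (F (u 0)) ∘ Subtype.val = f from
      funext fun x => Subtype.val_injective.extend_apply _ _ x]
  exact BoundedContinuousFunction.tendsto_iff_tendstoUniformly.1 hconv

lemma Differentiable.lipschitzOnWith_closedBall {F : Type*} [NormedAddCommGroup F]
    [NormedSpace ℂ F] {f : ℂ → F} (hf : Differentiable ℂ f) {a : ℂ} {r C : ℝ} (hr : 0 < r)
    (hC : ∀ z ∈ closedBall a (2 * r), ‖f z‖ ≤ C) :
    LipschitzOnWith (C / r).toNNReal f (closedBall a r) := by
  refine (convex_closedBall a r).lipschitzOnWith_of_nnnorm_deriv_le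
    (fun x _ => hf.differentiableAt) fun x hx => ?_
  rw [← norm_toNNReal]
  refine Real.toNNReal_mono (Complex.norm_deriv_le_of_forall_mem_sphere_norm_le hr
    hf.diffContOnCl fun z hz => hC z ?_)
  rw [mem_sphere] at hz
  rw [mem_closedBall] at hx ⊢
  linarith [dist_triangle z x a]

lemma IsEscapeRadius.exists_mem_nhds_hasUniformlyConvergentSubseqOn {G : ℂ → ℂ} {R : ℝ}
    (h : IsEscapeRadius G R) (hG : Differentiable ℂ G) {z : ℂ}
    (hz : z ∈ interior (filledJuliaSet G)) :
    ∃ s ∈ 𝓝 z, HasUniformlyConvergentSubseqOn (fun n => G^[n]) s := by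
  obtain ⟨ε, hε, hball⟩ := nhds_basis_closedBall.mem_iff.1 (mem_interior_iff_mem_nhds.1 hz)
  have hbound : ∀ n, ∀ x ∈ closedBall z (2 * (ε / 2)), ‖G^[n] x‖ ≤ R := fun n x hx =>
    h.norm_iterate_le (hball (by rwa [mul_div_cancel₀ ε two_ne_zero] at hx)) n
  refine ⟨closedBall z (ε / 2), closedBall_mem_nhds z (half_pos hε),
    hasUniformlyConvergentSubseqOn_of_lipschitzOnWith (isCompact_closedBall z _)
      (isCompact_closedBall 0 R) (fun n => (hG.iterate n).lipschitzOnWith_closedBall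
        (half_pos hε) (hbound n)) fun n x hx => ?_⟩
  rw [mem_closedBall, dist_zero_right]
  exact hbound n x (closedBall_subset_closedBall (by linarith) hx)

theorem juliaSet_prodMap_eq_frontier_filledJuliaSet {G₁ G₂ : ℂ → ℂ} {R₁ R₂ : ℝ}
    (hG₁ : Differentiable ℂ G₁) (hG₂ : Differentiable ℂ G₂)
    (h₁ : IsEscapeRadius G₁ R₁) (h₂ : IsEscapeRadius G₂ R₂) :
    juliaSet (Prod.map G₁ G₂) = frontier (filledJuliaSet (Prod.map G₁ G₂)) := by
  refine juliaSet_eq_frontier_filledJuliaSet (fun z hz => ?_) fun z hz => ?_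
  · simp only [Prod.map_iterate]
    rw [filledJuliaSet_prodMap, mem_prod, not_and_or] at hz
    rcases hz with hz | hz
    · obtain ⟨U, hU, hdiv⟩ := h₁.exists_mem_nhds_divergesUniformlyOn hG₁.continuous hz
      exact ⟨_, continuous_fst.continuousAt hU, hdiv.prodMap_fst fun n => G₂^[n]⟩
    · obtain ⟨U, hU, hdiv⟩ := h₂.exists_mem_nhds_divergesUniformlyOn hG₂.continuous hz
      exact ⟨_, continuous_snd.continuousAt hU, hdiv.prodMap_snd fun n => G₁^[n]⟩
  · rw [filledJuliaSet_prodMap, interior_prod_eq] at hz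
    obtain ⟨s₁, hs₁, hF₁⟩ := h₁.exists_mem_nhds_hasUniformlyConvergentSubseqOn hG₁ hz.1
    obtain ⟨s₂, hs₂, hF₂⟩ := h₂.exists_mem_nhds_hasUniformlyConvergentSubseqOn hG₂ hz.2
    simpa only [Prod.map_iterate] using (hF₁.prodMap hF₂).normalGenAt (prod_mem_nhds hs₁ hs₂)

/-- For a non-degenerate bicomplex polynomial `F(w₁, w₂) = (q₁(w₁), q₂(w₂))` of degree `d ≥ 2`,
the bicomplex Julia set is the topological boundary of the bicomplex filled-in Julia set:
`J₂(F) = ∂K₂(F)`. -/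
theorem stmt15 (q₁ q₂ : Polynomial ℂ) (d : ℕ) (hd : 2 ≤ d)
    (h₁ : q₁.natDegree = d) (h₂ : q₂.natDegree = d) :
    juliaSet (fun w : ℂ × ℂ => (q₁.eval w.1, q₂.eval w.2)) =
      frontier (filledJuliaSet (fun w : ℂ × ℂ => (q₁.eval w.1, q₂.eval w.2))) := by
  obtain ⟨R₁, hR₁⟩ := q₁.exists_isEscapeRadius (h₁ ▸ hd)
  obtain ⟨R₂, hR₂⟩ := q₂.exists_isEscapeRadius (h₂ ▸ hd)
  exact juliaSet_prodMap_eq_frontier_filledJuliaSet q₁.differentiable q₂.differentiable hR₁ hR₂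
end

section
/- Let q₁, q₂ be complex polynomials with deg q₁ = deg q₂ = d ≥ 2, and define F : ℂ × ℂ → ℂ × ℂ by F(w₁, w₂) = (q₁.eval w₁, q₂.eval w₂). Then K₂(F) \ J₂(F) = {ζ ∈ ℂ × ℂ : the family of iterates {F^[n] : n ∈ ℕ} is normal at ζ in the restrictive sense, i.e. there is an open neighborhood U of ζ such that every sequence of iterates has a subsequence converging uniformly on every compact subset of U to a limit function}. -/
/-- A family is normal in the restrictive sense at a point if it is normal on some open
neighborhood of that point. -/
def NormalAt {α β ι : Type*} [TopologicalSpace α] [UniformSpace β]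
    (F : ι → α → β) (z : α) : Prop :=
  ∃ U : Set α, IsOpen U ∧ z ∈ U ∧ NormalOn F U

open Filter

lemma exists_escape_radius (q : Polynomial ℂ) (hq : 2 ≤ q.natDegree) :
    ∃ R : ℝ, 1 ≤ R ∧ ∀ z : ℂ, R ≤ ‖z‖ → 2 * ‖z‖ ≤ ‖q.eval z‖ := by
  set d := q.natDegree with hd
  have hq0 : q ≠ 0 := by
    intro h; rw [h] at hd; simp [Polynomial.natDegree_zero] at hd; omega
  have hc : q.coeff d ≠ 0 := by
    rw [hd]; exact Polynomial.leadingCoeff_ne_zero.mpr hq0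
  set c := ‖q.coeff d‖ with hcdef
  have hcpos : 0 < c := norm_pos_iff.mpr hc
  set C := ∑ i ∈ Finset.range d, ‖q.coeff i‖ with hC
  have hC0 : 0 ≤ C := Finset.sum_nonneg fun _ _ => norm_nonneg _
  refine ⟨max 1 ((C + 2) / c), le_max_left _ _, ?_⟩
  intro z hz
  have hz1 : 1 ≤ ‖z‖ := le_trans (le_max_left _ _) hz
  have hz2 : C + 2 ≤ c * ‖z‖ := by
    have : (C + 2) / c ≤ ‖z‖ := le_trans (le_max_right _ _) hz
    rw [div_le_iff₀ hcpos] at this; linarith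
  have heval : q.eval z = (∑ i ∈ Finset.range d, q.coeff i * z ^ i) + q.coeff d * z ^ d := by
    rw [Polynomial.eval_eq_sum_range, Finset.sum_range_succ]
  have hsum : ‖∑ i ∈ Finset.range d, q.coeff i * z ^ i‖ ≤ C * ‖z‖ ^ (d - 1) := by
    calc ‖∑ i ∈ Finset.range d, q.coeff i * z ^ i‖
        ≤ ∑ i ∈ Finset.range d, ‖q.coeff i * z ^ i‖ := norm_sum_le _ _
      _ = ∑ i ∈ Finset.range d, ‖q.coeff i‖ * ‖z‖ ^ i := by
          simp [norm_mul, norm_pow]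
      _ ≤ ∑ i ∈ Finset.range d, ‖q.coeff i‖ * ‖z‖ ^ (d - 1) := by
          refine Finset.sum_le_sum fun i hi => ?_
          have := Finset.mem_range.mp hi
          exact mul_le_mul_of_nonneg_left
            (pow_le_pow_right₀ hz1 (by omega)) (norm_nonneg _)
      _ = C * ‖z‖ ^ (d - 1) := by rw [← Finset.sum_mul]
  have hpow : ‖z‖ ^ d = ‖z‖ ^ (d - 1) * ‖z‖ := by
    conv_lhs => rw [show d = (d - 1) + 1 by omega]
    rw [pow_succ]
  have hlead : ‖q.coeff d * z ^ d‖ = c * ‖z‖ ^ d := by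
    rw [norm_mul, norm_pow]
  have h1 : c * ‖z‖ ^ d - C * ‖z‖ ^ (d - 1) ≤ ‖q.eval z‖ := by
    rw [heval]
    have h2 := norm_sub_norm_le (q.coeff d * z ^ d) (-(∑ i ∈ Finset.range d, q.coeff i * z ^ i))
    simp only [norm_neg, sub_neg_eq_add] at h2
    rw [add_comm] at h2
    rw [hlead] at h2
    linarith
  have hpow1 : ‖z‖ ≤ ‖z‖ ^ (d - 1) := by
    calc ‖z‖ = ‖z‖ ^ 1 := (pow_one _).symm
      _ ≤ ‖z‖ ^ (d - 1) := pow_le_pow_right₀ hz1 (by omega)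
  have hfac : 2 * ‖z‖ ^ (d - 1) ≤ ‖z‖ ^ (d - 1) * (c * ‖z‖ - C) := by
    have hp : 0 < ‖z‖ ^ (d - 1) := lt_of_lt_of_le one_pos (le_trans hz1 hpow1)
    nlinarith
  calc 2 * ‖z‖ ≤ 2 * ‖z‖ ^ (d - 1) := by linarith
    _ ≤ ‖z‖ ^ (d - 1) * (c * ‖z‖ - C) := hfac
    _ = c * ‖z‖ ^ d - C * ‖z‖ ^ (d - 1) := by rw [hpow]; ring
    _ ≤ ‖q.eval z‖ := h1

lemma tendsto_norm_orbit (q : Polynomial ℂ) (hq : 2 ≤ q.natDegree) (a : ℕ → ℂ)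
    (ha : ∀ n, a (n + 1) = q.eval (a n))
    (hub : ¬ Bornology.IsBounded (Set.range a)) :
    Tendsto (fun n => ‖a n‖) atTop atTop := by
  obtain ⟨R, hR1, hR⟩ := exists_escape_radius q hq
  have : ¬ ∃ C, ∀ n, ‖a n‖ ≤ C := by
    intro ⟨C, hC⟩
    refine hub ((isBounded_iff_forall_norm_le).mpr ⟨C, ?_⟩)
    rintro x ⟨n, rfl⟩; exact hC n
  push_neg at this
  obtain ⟨m, hm⟩ := this R
  have hm' : R ≤ ‖a m‖ := le_of_lt hm
  have key : ∀ k, 2 ^ k * R ≤ ‖a (m + k)‖ := by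
    intro k
    induction k with
    | zero => simpa using hm'
    | succ k ih =>
      have hRk : R ≤ ‖a (m + k)‖ := by
        have : (1 : ℝ) ≤ 2 ^ k := one_le_pow₀ (by norm_num)
        nlinarith [ih]
      have := hR _ hRk
      rw [← ha (m + k)] at this
      have : 2 ^ (k + 1) * R ≤ 2 * ‖a (m + k)‖ := by
        rw [pow_succ]; nlinarith [ih]
      calc 2 ^ (k + 1) * R ≤ 2 * ‖a (m + k)‖ := this
        _ ≤ ‖a (m + k + 1)‖ := by rw [ha (m + k)]; exact hR _ hRk
  have h2 : Tendsto (fun k : ℕ => (2 : ℝ) ^ k * R) atTop atTop :=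
    Tendsto.atTop_mul_const (by linarith) (tendsto_pow_atTop_atTop_of_one_lt (by norm_num))
  have h3 : Tendsto (fun k => ‖a (m + k)‖) atTop atTop :=
    tendsto_atTop_mono key h2
  have h4 : Tendsto (fun n => ‖a (n + m)‖) atTop atTop := by
    simpa [add_comm] using h3
  exact (tendsto_add_atTop_iff_nat m).mp h4

/-- For a non-degenerate bicomplex polynomial `F(w₁, w₂) = (q₁(w₁), q₂(w₂))` of degree `d ≥ 2`,
the difference `K₂(F) \ J₂(F)` of the bicomplex filled-in Julia set and the bicomplex Julia set
is exactly the set of points at which the family of iterates of `F` is normal in the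
restrictive sense. -/
theorem stmt17 (q₁ q₂ : Polynomial ℂ) (d : ℕ) (hd : 2 ≤ d)
    (h₁ : q₁.natDegree = d) (h₂ : q₂.natDegree = d) :
    filledJuliaSet (fun w : ℂ × ℂ => (q₁.eval w.1, q₂.eval w.2)) \
        juliaSet (fun w : ℂ × ℂ => (q₁.eval w.1, q₂.eval w.2)) =
      {ζ : ℂ × ℂ | NormalAt (fun n : ℕ => (fun w : ℂ × ℂ => (q₁.eval w.1, q₂.eval w.2))^[n]) ζ} := by
  set G : ℂ × ℂ → ℂ × ℂ := fun w => (q₁.eval w.1, q₂.eval w.2) with hG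
  ext ζ
  simp only [Set.mem_diff, Set.mem_setOf_eq, juliaSet, filledJuliaSet, not_not]
  constructor
  · rintro ⟨hbd, U, hU, hζU, hnorm⟩
    refine ⟨U, hU, hζU, fun u => ?_⟩
    obtain ⟨φ, hφ, h⟩ := hnorm u
    refine ⟨φ, hφ, ?_⟩
    rcases h with ⟨f, hf⟩ | hdiv
    · exact ⟨f, hf⟩
    · exfalso
      obtain ⟨C, hC⟩ := isBounded_iff_forall_norm_le.mp hbd
      have hC' : ∀ n : ℕ, ‖G^[n] ζ‖ ≤ C := fun n => hC _ ⟨n, rfl⟩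
      have hC0 : 0 ≤ C := le_trans (norm_nonneg _) (hC' 0)
      have hdiv' := hdiv {ζ} (Set.singleton_subset_iff.mpr hζU) isCompact_singleton
        (C + 1) (by linarith)
      obtain ⟨n, hn⟩ := hdiv'.exists
      have := hn ζ (Set.mem_singleton ζ)
      have := hC' (u (φ n))
      linarith
  · rintro ⟨U, hU, hζU, hn⟩
    have hbd : Bornology.IsBounded (Set.range fun n : ℕ => G^[n] ζ) := by
      by_contra hub
      -- one of the component orbits is unbounded
      have hcomp : ¬ Bornology.IsBounded (Set.range fun n : ℕ => (G^[n] ζ).1) ∨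
          ¬ Bornology.IsBounded (Set.range fun n : ℕ => (G^[n] ζ).2) := by
        by_contra h
        push_neg at h
        obtain ⟨C₁, h1⟩ := isBounded_iff_forall_norm_le.mp h.1
        obtain ⟨C₂, h2⟩ := isBounded_iff_forall_norm_le.mp h.2
        refine hub (isBounded_iff_forall_norm_le.mpr ⟨max C₁ C₂, ?_⟩)
        rintro x ⟨n, rfl⟩
        rw [Prod.norm_def]
        exact max_le_max (h1 _ ⟨n, rfl⟩) (h2 _ ⟨n, rfl⟩)
      have htend : Filter.Tendsto (fun n : ℕ => ‖G^[n] ζ‖) Filter.atTop Filter.atTop := by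
        rcases hcomp with h | h
        · have ha : ∀ n : ℕ, (G^[n + 1] ζ).1 = q₁.eval ((G^[n] ζ).1) := by
            intro n; rw [Function.iterate_succ_apply']
          exact tendsto_atTop_mono (fun n => norm_fst_le (G^[n] ζ))
            (tendsto_norm_orbit q₁ (h₁ ▸ hd) _ ha h)
        · have ha : ∀ n : ℕ, (G^[n + 1] ζ).2 = q₂.eval ((G^[n] ζ).2) := by
            intro n; rw [Function.iterate_succ_apply']
          exact tendsto_atTop_mono (fun n => norm_snd_le (G^[n] ζ))
            (tendsto_norm_orbit q₂ (h₂ ▸ hd) _ ha h)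
      obtain ⟨φ, hφ, f, hf⟩ := hn (fun n => n)
      have hpt := (hf {ζ} (Set.singleton_subset_iff.mpr hζU) isCompact_singleton).tendsto_at
        (Set.mem_singleton ζ)
      have hnrm : Filter.Tendsto (fun n => ‖G^[φ n] ζ‖) Filter.atTop (nhds ‖f ζ‖) := hpt.norm
      have hat : Filter.Tendsto (fun n => ‖G^[φ n] ζ‖) Filter.atTop Filter.atTop :=
        htend.comp hφ.tendsto_atTop
      exact not_tendsto_atTop_of_tendsto_nhds hnrm hat
    refine ⟨hbd, U, hU, hζU, fun u => ?_⟩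
    obtain ⟨φ, hφ, f, hf⟩ := hn u
    exact ⟨φ, hφ, Or.inl ⟨f, hf⟩⟩
end

section
/- Let g, h : ℂ → ℂ be entire (Differentiable ℂ) non-constant functions and define f : ℂ × ℂ → ℂ × ℂ by f(w₁, w₂) = (g(w₁), h(w₂)). Let J₂(f) := {ζ ∈ ℂ × ℂ : the family of iterates {f^[n] : n ∈ ℕ} is not normal (general sense) at ζ}. Then: (1) if ζ ∈ J₂(f) then f(ζ) ∈ J₂(f); and (2) if ζ' ∈ ℂ × ℂ satisfies f(ζ') ∈ J₂(f), then ζ' ∈ J₂(f). In other words, J₂(f) is completely invariant under f. -/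
/-!
The iterates of `f` at `f ζ` are, up to an index shift by one, the iterates at `ζ` precomposed
with `f`, and an index shift does not affect normality. Precomposition with a continuous map
carries normality on `U` to `f⁻¹(U)`. Conversely, `f = g × h` is an open map of the locally
compact space `ℂ × ℂ` (open mapping theorem), so every compact subset of `f(U)` lies in the image
of a compact subset of `U`, and normality on `U` passes to `f(U)`.
-/

open Filter Set

lemma IsOpenMap.exists_isCompact_subset_of_subset_image {X Y : Type*} [TopologicalSpace X]
    [TopologicalSpace Y] [LocallyCompactSpace X] {f : X → Y} (hf : IsOpenMap f) {U : Set X}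
    (hU : IsOpen U) {K : Set Y} (hK : IsCompact K) (hKU : K ⊆ f '' U) :
    ∃ L : Set X, IsCompact L ∧ L ⊆ U ∧ K ⊆ f '' L := by
  have hnhds : ∀ y ∈ K, ∃ N : Set X, IsCompact N ∧ N ⊆ U ∧ y ∈ f '' interior N := by
    rintro _ hy
    obtain ⟨x, hxU, rfl⟩ := hKU hy
    obtain ⟨N, hN, hxN, hNU⟩ := exists_compact_subset hU hxU
    exact ⟨N, hN, hNU, mem_image_of_mem f hxN⟩
  choose! N hN hNU hyN using hnhds
  obtain ⟨t, htK, hcover⟩ := hK.elim_nhds_subcover (fun y => f '' interior (N y))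
    fun y hy => (hf _ isOpen_interior).mem_nhds (hyN y hy)
  refine ⟨⋃ y ∈ t, N y, t.isCompact_biUnion fun y hy => hN y (htK y hy),
    iUnion₂_subset fun y hy => hNU y (htK y hy), fun w hw => ?_⟩
  obtain ⟨y, hyt, x, hx, rfl⟩ := mem_iUnion₂.1 (hcover hw)
  exact ⟨x, mem_iUnion₂.2 ⟨y, hyt, interior_subset hx⟩, rfl⟩

lemma Differentiable.isOpenMap {g : ℂ → ℂ} (hg : Differentiable ℂ g)
    (hgnc : ¬ ∃ c : ℂ, g = fun _ => c) : IsOpenMap g :=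
  (AnalyticOnNhd.is_constant_or_isOpenMap fun z _ => hg.analyticAt z).resolve_left
    fun ⟨c, hc⟩ => hgnc ⟨c, funext hc⟩

namespace NormalGenOn

variable {α β E ι κ : Type*} [TopologicalSpace α] [TopologicalSpace β] [NormedAddCommGroup E]

lemma comp_index {F : ι → α → E} {U : Set α} (h : NormalGenOn F U) (e : κ → ι) :
    NormalGenOn (fun k => F (e k)) U :=
  fun u => h (e ∘ u)

lemma of_succ {F : ℕ → α → E} {U : Set α} (h : NormalGenOn (fun n => F (n + 1)) U) :
    NormalGenOn F U := by
  intro u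
  by_cases hzero : ∃ᶠ k in atTop, u k = 0
  · obtain ⟨φ, hφ, hφ0⟩ := extraction_of_frequently_atTop hzero
    refine ⟨φ, hφ, Or.inl ⟨F 0, fun K _ _ s hs => Eventually.of_forall fun n x _ => ?_⟩⟩
    simpa only [hφ0] using refl_mem_uniformity hs
  · obtain ⟨N, hN⟩ := eventually_atTop.1 (not_frequently.1 hzero)
    obtain ⟨ψ, hψ, hψconv⟩ := h fun k => u (k + N) - 1
    have hshift : ∀ k, u (ψ k + N) - 1 + 1 = u (ψ k + N) := fun k =>
      Nat.sub_add_cancel (Nat.one_le_iff_ne_zero.2 (hN _ (Nat.le_add_left N _)))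
    refine ⟨fun k => ψ k + N, fun a b hab => Nat.add_lt_add_right (hψ hab) N, ?_⟩
    simpa only [hshift] using hψconv

lemma comp_right {F : ι → β → E} {U : Set β} (h : NormalGenOn F U) {f : α → β}
    (hf : Continuous f) : NormalGenOn (fun i => F i ∘ f) (f ⁻¹' U) := by
  intro u
  obtain ⟨φ, hφ, ⟨G, hG⟩ | hdiv⟩ := h u
  · refine ⟨φ, hφ, Or.inl ⟨G ∘ f, fun K hKU hK => ?_⟩⟩
    exact ((hG (f '' K) (image_subset_iff.2 hKU) (hK.image hf)).comp f).mono
      (subset_preimage_image f K)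
  · refine ⟨φ, hφ, Or.inr fun K hKU hK M hM => ?_⟩
    exact (hdiv (f '' K) (image_subset_iff.2 hKU) (hK.image hf) M hM).mono
      fun n hn x hx => hn (f x) (mem_image_of_mem f hx)

lemma of_comp_right [LocallyCompactSpace α] {F : ι → β → E} {f : α → β} (hf : IsOpenMap f)
    {U : Set α} (hU : IsOpen U) (h : NormalGenOn (fun i => F i ∘ f) U) :
    NormalGenOn F (f '' U) := by
  intro u
  obtain ⟨φ, hφ, ⟨G, hG⟩ | hdiv⟩ := h u
  · -- the limit at `f x` is read off pointwise, so it does not depend on the preimage `x`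
    refine ⟨φ, hφ, Or.inl ⟨fun y => limUnder atTop fun n => F (u (φ n)) y,
      fun K hKU hK s hs => ?_⟩⟩
    obtain ⟨L, hL, hLU, hKL⟩ := hf.exists_isCompact_subset_of_subset_image hU hK hKU
    have hGL := hG L hLU hL
    filter_upwards [hGL s hs] with n hn y hy
    obtain ⟨x, hx, rfl⟩ := hKL hy
    have hlim : limUnder atTop (fun n => F (u (φ n)) (f x)) = G x :=
      (hGL.tendsto_at hx).limUnder_eq
    rw [hlim]
    exact hn x hx
  · refine ⟨φ, hφ, Or.inr fun K hKU hK M hM => ?_⟩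
    obtain ⟨L, hL, hLU, hKL⟩ := hf.exists_isCompact_subset_of_subset_image hU hK hKU
    filter_upwards [hdiv L hLU hL M hM] with n hn y hy
    obtain ⟨x, hx, rfl⟩ := hKL hy
    exact hn x hx

end NormalGenOn

section Iterate

variable {E : Type*} [NormedAddCommGroup E] {f : E → E}

lemma NormalGenAt.iterate_of_map (hf : Continuous f) {ζ : E}
    (h : NormalGenAt (fun n => f^[n]) (f ζ)) : NormalGenAt (fun n => f^[n]) ζ := by
  obtain ⟨U, hU, hζU, hnormal⟩ := h
  refine ⟨f ⁻¹' U, hU.preimage hf, hζU, NormalGenOn.of_succ ?_⟩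
  simpa only [Function.iterate_succ] using hnormal.comp_right hf

lemma NormalGenAt.iterate_map [LocallyCompactSpace E] (hf : IsOpenMap f) {ζ : E}
    (h : NormalGenAt (fun n => f^[n]) ζ) : NormalGenAt (fun n => f^[n]) (f ζ) := by
  obtain ⟨U, hU, hζU, hnormal⟩ := h
  refine ⟨f '' U, hf U hU, mem_image_of_mem f hζU, NormalGenOn.of_comp_right hf hU ?_⟩
  simpa only [← Function.iterate_succ] using hnormal.comp_index Nat.succ

lemma map_mem_juliaSet (hf : Continuous f) {ζ : E} (hζ : ζ ∈ juliaSet f) :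
    f ζ ∈ juliaSet f :=
  fun hnormal => hζ (hnormal.iterate_of_map hf)

lemma mem_juliaSet_of_map_mem [LocallyCompactSpace E] (hf : IsOpenMap f) {ζ : E}
    (hζ : f ζ ∈ juliaSet f) : ζ ∈ juliaSet f :=
  fun hnormal => hζ (hnormal.iterate_map hf)

end Iterate

/-- For an entire strongly non-constant 𝕋-holomorphic function
`f(w₁, w₂) = (g(w₁), h(w₂))` (with `g`, `h` entire and non-constant), the bicomplex Julia set
`J₂(f)` is completely invariant: `ζ ∈ J₂(f)` implies `f(ζ) ∈ J₂(f)`, and `f(ζ') ∈ J₂(f)`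
implies `ζ' ∈ J₂(f)`. -/
theorem stmt19 (g h : ℂ → ℂ)
    (hg : Differentiable ℂ g) (hh : Differentiable ℂ h)
    (hgnc : ¬ ∃ c : ℂ, g = fun _ => c) (hhnc : ¬ ∃ c : ℂ, h = fun _ => c) :
    let f : ℂ × ℂ → ℂ × ℂ := fun w => (g w.1, h w.2)
    (∀ ζ : ℂ × ℂ, ζ ∈ juliaSet f → f ζ ∈ juliaSet f) ∧
    (∀ ζ' : ℂ × ℂ, f ζ' ∈ juliaSet f → ζ' ∈ juliaSet f) := by
  intro f
  have hf : Continuous f := hg.continuous.prodMap hh.continuous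
  have hf' : IsOpenMap f := (hg.isOpenMap hgnc).prodMap (hh.isOpenMap hhnc)
  exact ⟨fun _ => map_mem_juliaSet hf, fun _ => mem_juliaSet_of_map_mem hf'⟩
end
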